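/- arXiv:2011.08327 — 9 statements merged into one kernel-verified Lean document; each statement's English description precedes it below -/
import Mathlib

section
/- Let A > 0, 0 < E < A/2, and let μ* > 0 be the unique positive solution of 1/μ − e^{−μ}/(1 − e^{−μ}) = E/A. Then every probability density p supported on [0, A] with ∫₀^A x p(x) dx ≤ E satisfies −∫₀^A p(x) log p(x) dx ≤ log(A(1 − e^{−μ*})/μ*) + μ*E/A, and equality holds for the truncated-exponential density p_{μ*}. -/
open MeasureTheory

private lemma hd_exp (b x : ℝ) :
    HasDerivAt (fun y => Real.exp (-(b * y))) (-b * Real.exp (-(b * x))) x := by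
  have h1 : HasDerivAt (fun y : ℝ => -(b * y)) (-b) x := by
    simpa [neg_mul] using ((hasDerivAt_id x).const_mul (-b))
  simpa [mul_comm, Function.comp_def] using (Real.hasDerivAt_exp (-(b * x))).comp x h1

private lemma int_exp (b A : ℝ) (hb : b ≠ 0) :
    ∫ x in (0:ℝ)..A, Real.exp (-(b * x)) = (1 - Real.exp (-(b * A))) / b := by
  have hF : ∀ x ∈ Set.uIcc (0:ℝ) A,
      HasDerivAt (fun y => -Real.exp (-(b * y)) / b) (Real.exp (-(b * x))) x := by
    intro x _
    have h := ((hd_exp b x).neg).div_const b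
    exact h.congr_deriv (by field_simp)
  rw [intervalIntegral.integral_eq_sub_of_hasDerivAt hF
    ((Real.continuous_exp.comp (by fun_prop)).intervalIntegrable 0 A)]
  simp [Real.exp_zero]
  ring

private lemma int_xexp (b A : ℝ) (hb : b ≠ 0) :
    ∫ x in (0:ℝ)..A, x * Real.exp (-(b * x))
      = (1 - Real.exp (-(b * A)) * (1 + b * A)) / b ^ 2 := by
  have hF : ∀ x ∈ Set.uIcc (0:ℝ) A,
      HasDerivAt (fun y => -((y / b) + 1 / b ^ 2) * Real.exp (-(b * y)))
        (x * Real.exp (-(b * x))) x := by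
    intro x _
    have h1 : HasDerivAt (fun y : ℝ => -((y / b) + 1 / b ^ 2)) (-(1 / b)) x := by
      simpa only [id_eq, Pi.neg_def] using (((hasDerivAt_id x).div_const b).add_const (1 / b ^ 2)).neg
    have h := h1.mul (hd_exp b x)
    exact h.congr_deriv (by field_simp; ring)
  rw [intervalIntegral.integral_eq_sub_of_hasDerivAt hF
    ((by fun_prop : Continuous fun x : ℝ => x * Real.exp (-(b * x))).intervalIntegrable 0 A)]
  rw [show -(b * (0:ℝ)) = 0 by ring, Real.exp_zero]
  field_simp
  ring

private lemma gibbs_pt (p q : ℝ) (hp : 0 ≤ p) (hq : 0 < q) :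
    p * Real.log q - p * Real.log p ≤ q - p := by
  rcases eq_or_lt_of_le hp with h | h
  · simp [← h, hq.le]
  · have h2 : Real.log (q / p) ≤ q / p - 1 :=
      Real.log_le_sub_one_of_pos (by positivity)
    have h3 : Real.log (q / p) = Real.log q - Real.log p := Real.log_div hq.ne' h.ne'
    have h4 := mul_le_mul_of_nonneg_left h2 h.le
    calc p * Real.log q - p * Real.log p = p * Real.log (q / p) := by rw [h3]; ring
      _ ≤ p * (q / p - 1) := h4
      _ = q - p := by field_simp

/-- Max-entropy property of the truncated-exponential density: for `A > 0`, `0 < E < A/2`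
and `μ* > 0` the unique positive solution of `1/μ − e^{−μ}/(1 − e^{−μ}) = E/A`, every
probability density `p` supported on `[0, A]` with mean at most `E` has differential entropy
at most `log(A(1 − e^{−μ*})/μ*) + μ*E/A`, with equality for the truncated-exponential
density with parameter `μ*`. -/
theorem stmt_3 (A E μ : ℝ) (hA : 0 < A) (hE0 : 0 < E) (hE : E < A / 2)
    (hμ : 0 < μ) (hroot : 1 / μ - Real.exp (-μ) / (1 - Real.exp (-μ)) = E / A) :
    (∀ p : ℝ → ℝ, Measurable p → (∀ x, 0 ≤ p x) →
      (∀ x, x ∉ Set.Icc (0 : ℝ) A → p x = 0) →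
      IntervalIntegrable p volume 0 A →
      IntervalIntegrable (fun x => x * p x) volume 0 A →
      IntervalIntegrable (fun x => p x * Real.log (p x)) volume 0 A →
      (∫ x in (0 : ℝ)..A, p x) = 1 →
      (∫ x in (0 : ℝ)..A, x * p x) ≤ E →
      -(∫ x in (0 : ℝ)..A, p x * Real.log (p x))
        ≤ Real.log (A * (1 - Real.exp (-μ)) / μ) + μ * E / A) ∧
    -(∫ x in (0 : ℝ)..A,
        (μ / (A * (1 - Real.exp (-μ))) * Real.exp (-μ * x / A)) *
          Real.log (μ / (A * (1 - Real.exp (-μ))) * Real.exp (-μ * x / A)))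
      = Real.log (A * (1 - Real.exp (-μ)) / μ) + μ * E / A := by
  have hexp1 : Real.exp (-μ) < 1 := by
    rw [Real.exp_lt_one_iff]; linarith
  have h1m : 0 < 1 - Real.exp (-μ) := by linarith
  set c : ℝ := μ / (A * (1 - Real.exp (-μ))) with hc_def
  have hc : 0 < c := by positivity
  set b : ℝ := μ / A with hb_def
  have hb : 0 < b := by positivity
  have hbA : b * A = μ := by rw [hb_def]; field_simp
  have hfun : ∀ x : ℝ, -μ * x / A = -(b * x) := by
    intro x; rw [hb_def]; ring
  -- the density q
  set q : ℝ → ℝ := fun x => c * Real.exp (-(b * x)) with hq_def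
  have hqpos : ∀ x, 0 < q x := fun x => by positivity
  have hqcont : Continuous q := by fun_prop
  -- integral of q is 1
  have hq1 : (∫ x in (0:ℝ)..A, q x) = 1 := by
    rw [hq_def]
    rw [intervalIntegral.integral_const_mul, int_exp b A hb.ne', hbA]
    rw [hc_def, hb_def]
    field_simp
  -- mean of q is E
  have hE' : E = A * (1 / μ - Real.exp (-μ) / (1 - Real.exp (-μ))) := by
    rw [hroot]; field_simp
  have hq2 : (∫ x in (0:ℝ)..A, x * q x) = E := by
    have heq : (fun x => x * q x) = fun x => c * (x * Real.exp (-(b * x))) := by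
      funext x; rw [hq_def]; ring
    rw [heq, intervalIntegral.integral_const_mul, int_xexp b A hb.ne', hbA, hE',
      hc_def, hb_def]
    field_simp
    ring
  -- log of q
  have hlogq : ∀ x, Real.log (q x) = Real.log c - b * x := by
    intro x
    rw [hq_def]
    rw [Real.log_mul hc.ne' (Real.exp_ne_zero _), Real.log_exp]
    ring
  -- - log c equals the log in the statement
  have hlogc : Real.log (A * (1 - Real.exp (-μ)) / μ) = -Real.log c := by
    rw [show A * (1 - Real.exp (-μ)) / μ = c⁻¹ by rw [hc_def]; field_simp, Real.log_inv]
  constructor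
  · intro p _ hp hsupp hip hixp hiplogp hp1 hpE
    -- pointwise Gibbs inequality
    have hpt : ∀ x ∈ Set.Icc (0:ℝ) A,
        (Real.log c * p x - b * (x * p x)) - p x * Real.log (p x) ≤ q x - p x := by
      intro x _
      have h := gibbs_pt (p x) (q x) (hp x) (hqpos x)
      rw [hlogq x] at h
      nlinarith [h]
    have hint1 : IntervalIntegrable
        (fun x => (Real.log c * p x - b * (x * p x)) - p x * Real.log (p x))
        volume 0 A :=
      ((hip.const_mul _).sub (hixp.const_mul _)).sub hiplogp
    have hint2 : IntervalIntegrable (fun x => q x - p x) volume 0 A :=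
      (hqcont.intervalIntegrable 0 A).sub hip
    have hmono := intervalIntegral.integral_mono_on hA.le hint1 hint2 hpt
    have hrhs : (∫ x in (0:ℝ)..A, (q x - p x)) = 0 := by
      rw [intervalIntegral.integral_sub (hqcont.intervalIntegrable 0 A) hip, hq1, hp1]
      ring
    have hlhs : (∫ x in (0:ℝ)..A,
        ((Real.log c * p x - b * (x * p x)) - p x * Real.log (p x)))
        = (Real.log c - b * (∫ x in (0:ℝ)..A, x * p x))
          - ∫ x in (0:ℝ)..A, p x * Real.log (p x) := by
      rw [intervalIntegral.integral_sub ((hip.const_mul _).sub (hixp.const_mul _)) hiplogp,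
        intervalIntegral.integral_sub (hip.const_mul _) (hixp.const_mul _),
        intervalIntegral.integral_const_mul, intervalIntegral.integral_const_mul, hp1]
      ring
    rw [hlhs, hrhs] at hmono
    have hbE : b * (∫ x in (0:ℝ)..A, x * p x) ≤ b * E :=
      mul_le_mul_of_nonneg_left hpE hb.le
    rw [hlogc]
    have : μ * E / A = b * E := by rw [hb_def]; ring
    rw [this]
    linarith
  · -- equality for the truncated exponential
    have heqfun : (fun x => (μ / (A * (1 - Real.exp (-μ))) * Real.exp (-μ * x / A)) *
          Real.log (μ / (A * (1 - Real.exp (-μ))) * Real.exp (-μ * x / A)))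
        = fun x => Real.log c * q x - b * (x * q x) := by
      funext x
      rw [hfun x, ← hc_def]
      rw [Real.log_mul hc.ne' (Real.exp_ne_zero _), Real.log_exp]
      simp only [hq_def]
      ring
    rw [heqfun]
    have hc1 : Continuous fun x : ℝ => Real.log c * q x := continuous_const.mul hqcont
    have hc2 : Continuous fun x : ℝ => b * (x * q x) :=
      continuous_const.mul (continuous_id'.mul hqcont)
    rw [intervalIntegral.integral_sub (hc1.intervalIntegrable 0 A)
      (hc2.intervalIntegrable 0 A)]
    rw [intervalIntegral.integral_const_mul, hq1, intervalIntegral.integral_const_mul, hq2]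
    rw [hlogc]
    rw [hb_def]
    ring
end

section
/- Let k ≥ 1 be an integer and let A > 0 and 0 < E < A/2 be reals. The polynomial t ↦ Σ_{i=0}^{k} (1 − iA/(kE)) tⁱ has exactly one root t₀ in (0, ∞), and this root satisfies 0 < t₀ < 1. -/
/-- Key monotonicity lemma: there is an exponent `m` such that
`t ↦ f t / t^m` is strictly decreasing on positives, expressed multiplicatively. -/
lemma stmt4_aux (k : ℕ) (hk : 1 ≤ k) (A E : ℝ) (hA : 0 < A) (hE0 : 0 < E) (hE : E < A / 2) :
    ∃ m : ℕ, ∀ t1 t2 : ℝ, 0 < t1 → t1 < t2 →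
      t1 ^ m * (∑ i ∈ Finset.range (k + 1), (1 - (i : ℝ) * A / ((k : ℝ) * E)) * t2 ^ i) <
      t2 ^ m * (∑ i ∈ Finset.range (k + 1), (1 - (i : ℝ) * A / ((k : ℝ) * E)) * t1 ^ i) := by
  have hkR : (1:ℝ) ≤ (k:ℝ) := by exact_mod_cast hk
  have hkpos : (0:ℝ) < k := by linarith
  have hkE : (0:ℝ) < (k:ℝ) * E := mul_pos hkpos hE0
  set m : ℕ := Nat.floor ((k:ℝ) * E / A) with hmdef
  have hmle : (m:ℝ) ≤ (k:ℝ) * E / A := Nat.floor_le (by positivity)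
  have hmlt : (k:ℝ) * E / A < (m:ℝ) + 1 := Nat.lt_floor_add_one _
  have hmk : m < k := by
    rw [hmdef, Nat.floor_lt (by positivity)]
    rw [div_lt_iff₀ hA]
    nlinarith
  have hcpos : ∀ i : ℕ, i ≤ m → 0 ≤ 1 - (i:ℝ) * A / ((k:ℝ) * E) := by
    intro i hi
    have h1 : (i:ℝ) ≤ (k:ℝ) * E / A := le_trans (by exact_mod_cast hi) hmle
    have h2 : (i:ℝ) * A ≤ (k:ℝ) * E := by rwa [le_div_iff₀ hA] at h1
    have h3 : (i:ℝ) * A / ((k:ℝ) * E) ≤ 1 := by rw [div_le_one hkE]; exact h2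
    linarith
  have hcneg : ∀ i : ℕ, m < i → 1 - (i:ℝ) * A / ((k:ℝ) * E) < 0 := by
    intro i hi
    have h1 : (m:ℝ) + 1 ≤ (i:ℝ) := by exact_mod_cast hi
    have h2 : (k:ℝ) * E / A < (i:ℝ) := lt_of_lt_of_le hmlt h1
    have h3 : (k:ℝ) * E < (i:ℝ) * A := by rwa [div_lt_iff₀ hA] at h2
    have h4 : 1 < (i:ℝ) * A / ((k:ℝ) * E) := by rw [lt_div_iff₀ hkE]; linarith
    linarith
  refine ⟨m, ?_⟩
  intro t1 t2 ht1 ht12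
  have ht2 : (0:ℝ) < t2 := lt_trans ht1 ht12
  rw [Finset.mul_sum, Finset.mul_sum]
  apply Finset.sum_lt_sum
  · intro i _
    rcases le_or_gt i m with him | him
    · obtain ⟨d, hd⟩ := Nat.exists_eq_add_of_le him
      have h1 : t1 ^ d ≤ t2 ^ d := pow_le_pow_left₀ ht1.le ht12.le d
      have h2 : 0 ≤ 1 - (i:ℝ) * A / ((k:ℝ) * E) := hcpos i him
      have hnn : 0 ≤ (1 - (i:ℝ) * A / ((k:ℝ) * E)) * (t1 ^ i * t2 ^ i * (t2 ^ d - t1 ^ d)) :=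
        mul_nonneg h2 (mul_nonneg (by positivity) (by linarith))
      have hring : t2 ^ m * ((1 - (i:ℝ) * A / ((k:ℝ) * E)) * t1 ^ i)
          - t1 ^ m * ((1 - (i:ℝ) * A / ((k:ℝ) * E)) * t2 ^ i)
          = (1 - (i:ℝ) * A / ((k:ℝ) * E)) * (t1 ^ i * t2 ^ i * (t2 ^ d - t1 ^ d)) := by
        simp only [hd, pow_add]; ring
      linarith
    · obtain ⟨d, hd⟩ := Nat.exists_eq_add_of_lt him
      have h1 : t1 ^ (d + 1) ≤ t2 ^ (d + 1) := pow_le_pow_left₀ ht1.le ht12.le _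
      have h2 : 1 - (i:ℝ) * A / ((k:ℝ) * E) < 0 := hcneg i him
      have hnn : 0 ≤ (1 - (i:ℝ) * A / ((k:ℝ) * E)) * (t1 ^ m * t2 ^ m * (t1 ^ (d+1) - t2 ^ (d+1))) := by
        have hb : t1 ^ m * t2 ^ m * (t1 ^ (d+1) - t2 ^ (d+1)) ≤ 0 :=
          mul_nonpos_of_nonneg_of_nonpos (by positivity) (by linarith)
        nlinarith [hb, h2.le]
      have hring : t2 ^ m * ((1 - (i:ℝ) * A / ((k:ℝ) * E)) * t1 ^ i)
          - t1 ^ m * ((1 - (i:ℝ) * A / ((k:ℝ) * E)) * t2 ^ i)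
          = (1 - (i:ℝ) * A / ((k:ℝ) * E)) * (t1 ^ m * t2 ^ m * (t1 ^ (d+1) - t2 ^ (d+1))) := by
        simp only [hd, pow_add]; ring
      linarith
  · refine ⟨k, Finset.mem_range.mpr (by omega), ?_⟩
    obtain ⟨d, hd⟩ := Nat.exists_eq_add_of_lt hmk
    have h1 : t1 ^ (d + 1) < t2 ^ (d + 1) :=
      pow_lt_pow_left₀ ht12 ht1.le (by omega)
    have h2 : 1 - (k:ℝ) * A / ((k:ℝ) * E) < 0 := hcneg k hmk
    have hpos : 0 < (1 - (k:ℝ) * A / ((k:ℝ) * E)) * (t1 ^ m * t2 ^ m * (t1 ^ (d+1) - t2 ^ (d+1))) := by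
      apply mul_pos_of_neg_of_neg h2
      exact mul_neg_of_pos_of_neg (by positivity) (by linarith)
    have hring : t2 ^ m * ((1 - (k:ℝ) * A / ((k:ℝ) * E)) * t1 ^ k)
        - t1 ^ m * ((1 - (k:ℝ) * A / ((k:ℝ) * E)) * t2 ^ k)
        = (1 - (k:ℝ) * A / ((k:ℝ) * E)) * (t1 ^ m * t2 ^ m * (t1 ^ (d+1) - t2 ^ (d+1))) := by
      simp only [hd, pow_add]; ring
    linarith

/-- For `k ≥ 1`, `A > 0` and `0 < E < A/2`, the polynomial
`t ↦ Σ_{i=0}^{k} (1 − iA/(kE)) tⁱ` has exactly one root in `(0, ∞)`,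
and this root lies in `(0, 1)`. -/
theorem stmt_4 (k : ℕ) (hk : 1 ≤ k) (A E : ℝ) (hA : 0 < A) (hE0 : 0 < E) (hE : E < A / 2) :
    (∃! t : ℝ, 0 < t ∧
      ∑ i ∈ Finset.range (k + 1), (1 - (i : ℝ) * A / ((k : ℝ) * E)) * t ^ i = 0) ∧
    ∀ t : ℝ, 0 < t →
      (∑ i ∈ Finset.range (k + 1), (1 - (i : ℝ) * A / ((k : ℝ) * E)) * t ^ i = 0) →
      t < 1 := by
  obtain ⟨m, key⟩ := stmt4_aux k hk A E hA hE0 hE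
  have hkR : (1:ℝ) ≤ (k:ℝ) := by exact_mod_cast hk
  have hkpos : (0:ℝ) < k := by linarith
  have hkE : (0:ℝ) < (k:ℝ) * E := mul_pos hkpos hE0
  -- value at 1 is negative
  have gauss : ∀ n : ℕ, ∑ i ∈ Finset.range n, (i:ℝ) = n * (n - 1) / 2 := by
    intro n
    induction n with
    | zero => simp
    | succ n ih => rw [Finset.sum_range_succ, ih]; push_cast; ring
  have hf1 : (∑ i ∈ Finset.range (k + 1), (1 - (i : ℝ) * A / ((k : ℝ) * E)) * (1:ℝ) ^ i) < 0 := by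
    have hexp : (∑ i ∈ Finset.range (k + 1), (1 - (i : ℝ) * A / ((k : ℝ) * E)) * (1:ℝ) ^ i)
        = ((k:ℝ) + 1) - ((k:ℝ) + 1) * (k:ℝ) / 2 * (A / ((k:ℝ) * E)) := by
      simp only [one_pow, mul_one, Finset.sum_sub_distrib, Finset.sum_const,
        Finset.card_range, nsmul_eq_mul, mul_one]
      have h1 : ∑ i ∈ Finset.range (k + 1), (i:ℝ) * A / ((k:ℝ) * E)
          = (∑ i ∈ Finset.range (k + 1), (i:ℝ)) * (A / ((k:ℝ) * E)) := by
        rw [Finset.sum_mul]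
        exact Finset.sum_congr rfl fun i _ => mul_div_assoc _ _ _
      rw [h1, gauss]
      push_cast
      ring
    rw [hexp]
    have h2 : ((k:ℝ) + 1) * (k:ℝ) / 2 * (A / ((k:ℝ) * E)) = ((k:ℝ) + 1) * (A / (2 * E)) := by
      field_simp
    rw [h2]
    have h3 : (1:ℝ) < A / (2 * E) := by
      rw [lt_div_iff₀ (by linarith)]; linarith
    nlinarith
  -- value at 0 is 1
  have hf0 : (∑ i ∈ Finset.range (k + 1), (1 - (i : ℝ) * A / ((k : ℝ) * E)) * (0:ℝ) ^ i) = 1 := by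
    rw [Finset.sum_eq_single 0]
    · norm_num
    · intro i _ hi
      simp [zero_pow hi]
    · intro h
      exact absurd (Finset.mem_range.mpr (by omega)) h
  -- continuity
  have hcont : ContinuousOn
      (fun t : ℝ => ∑ i ∈ Finset.range (k + 1), (1 - (i : ℝ) * A / ((k : ℝ) * E)) * t ^ i)
      (Set.Icc (0:ℝ) 1) := by
    apply Continuous.continuousOn
    apply continuous_finset_sum
    intro i _
    exact continuous_const.mul (continuous_pow i)
  -- existence via IVT
  have hmem : (0:ℝ) ∈ Set.Ioo
      (∑ i ∈ Finset.range (k + 1), (1 - (i : ℝ) * A / ((k : ℝ) * E)) * (1:ℝ) ^ i)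
      (∑ i ∈ Finset.range (k + 1), (1 - (i : ℝ) * A / ((k : ℝ) * E)) * (0:ℝ) ^ i) :=
    ⟨hf1, by rw [hf0]; norm_num⟩
  obtain ⟨t0, ht0mem, ht0'⟩ := intermediate_value_Ioo' (by norm_num : (0:ℝ) ≤ 1) hcont hmem
  have ht0 : ∑ i ∈ Finset.range (k + 1), (1 - (i : ℝ) * A / ((k : ℝ) * E)) * t0 ^ i = 0 := ht0'
  -- all positive roots are < 1
  have hlt1 : ∀ t : ℝ, 0 < t →
      (∑ i ∈ Finset.range (k + 1), (1 - (i : ℝ) * A / ((k : ℝ) * E)) * t ^ i = 0) →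
      t < 1 := by
    intro t ht hroot
    by_contra h
    push_neg at h
    rcases eq_or_lt_of_le h with heq | hlt
    · rw [← heq] at hroot
      linarith
    · have hkey := key 1 t one_pos hlt
      rw [hroot, mul_zero] at hkey
      have htm : (0:ℝ) < t ^ m := pow_pos ht m
      nlinarith
  refine ⟨⟨t0, ⟨ht0mem.1, ht0⟩, ?_⟩, hlt1⟩
  rintro y ⟨hy0, hy⟩
  rcases lt_trichotomy y t0 with h | h | h
  · exfalso
    have := key y t0 hy0 h
    rw [hy, ht0, mul_zero, mul_zero] at this
    exact lt_irrefl 0 this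
  · exact h
  · exfalso
    have := key t0 y ht0mem.1 h
    rw [hy, ht0, mul_zero, mul_zero] at this
    exact lt_irrefl 0 this
end

section
/- Let k ≥ 1 be an integer, A > 0, 0 < E < A/2, and let t₀ ∈ (0, 1) be the unique positive root of Σ_{i=0}^{k} (1 − iA/(kE)) tⁱ. Define a*_i = t₀ⁱ / Σ_{j=0}^{k} t₀ʲ for i = 0, …, k. Then for every probability vector (a₀, …, a_k) (a_i ≥ 0, Σ_i a_i = 1) satisfying the mean constraint Σ_{i=0}^{k} (iA/k) a_i ≤ E, the Shannon entropy satisfies −Σ_{i=0}^{k} a_i log a_i ≤ −Σ_{i=0}^{k} a*_i log a*_i, and the maximum value equals log(Σ_{j=0}^{k} t₀ʲ) − (kE/A)·log t₀. -/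
/-- Discrete max-entropy result of Farid–Hranilovic: with `t₀ ∈ (0,1)` the unique positive
root of `Σ_{i=0}^{k} (1 − iA/(kE)) tⁱ`, the truncated-geometric probability vector
`a*_i = t₀ⁱ / Σ_j t₀ʲ` maximizes Shannon entropy among all probability vectors on
`{0, A/k, …, A}` with mean at most `E`, and the maximum equals
`log(Σ_j t₀ʲ) − (kE/A) log t₀`. -/
theorem stmt_5 (k : ℕ) (hk : 1 ≤ k) (A E t₀ : ℝ) (hA : 0 < A) (hE0 : 0 < E) (hE : E < A / 2)
    (ht0 : 0 < t₀) (ht1 : t₀ < 1)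
    (hroot : ∑ i ∈ Finset.range (k + 1), (1 - (i : ℝ) * A / ((k : ℝ) * E)) * t₀ ^ i = 0) :
    (∀ a : ℕ → ℝ, (∀ i, 0 ≤ a i) → (∑ i ∈ Finset.range (k + 1), a i = 1) →
      (∑ i ∈ Finset.range (k + 1), ((i : ℝ) * A / (k : ℝ)) * a i ≤ E) →
      ∑ i ∈ Finset.range (k + 1), Real.negMulLog (a i)
        ≤ ∑ i ∈ Finset.range (k + 1),
            Real.negMulLog (t₀ ^ i / ∑ j ∈ Finset.range (k + 1), t₀ ^ j)) ∧
    ∑ i ∈ Finset.range (k + 1),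
        Real.negMulLog (t₀ ^ i / ∑ j ∈ Finset.range (k + 1), t₀ ^ j)
      = Real.log (∑ j ∈ Finset.range (k + 1), t₀ ^ j) - ((k : ℝ) * E / A) * Real.log t₀ := by
  have hk0 : (0:ℝ) < k := by exact_mod_cast hk
  set S := ∑ j ∈ Finset.range (k+1), t₀ ^ j with hSdef
  have hS : 0 < S := Finset.sum_pos (fun i _ => pow_pos ht0 i)
    ⟨0, Finset.mem_range.mpr (Nat.succ_pos k)⟩
  set M := ∑ i ∈ Finset.range (k+1), (i:ℝ) * t₀ ^ i with hMdef
  have hM : M = ((k:ℝ) * E / A) * S := by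
    have h1 : ∑ i ∈ Finset.range (k+1), (1 - (i:ℝ)*A/((k:ℝ)*E)) * t₀^i
        = S - (A/((k:ℝ)*E)) * M := by
      rw [hSdef, hMdef, Finset.mul_sum, ← Finset.sum_sub_distrib]
      exact Finset.sum_congr rfl fun i _ => by ring
    rw [h1] at hroot
    have hkE : (0:ℝ) < (k:ℝ)*E := by positivity
    field_simp at hroot ⊢
    linarith
  have hlogb : ∀ i ∈ Finset.range (k+1),
      Real.log (t₀^i / S) = (i:ℝ) * Real.log t₀ - Real.log S := by
    intro i _
    rw [Real.log_div (pow_ne_zero i ht0.ne') hS.ne', Real.log_pow]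
  have h1 : ∑ i ∈ Finset.range (k+1), t₀^i / S = 1 := by
    rw [← Finset.sum_div, ← hSdef, div_self hS.ne']
  have h2 : ∑ i ∈ Finset.range (k+1), (i:ℝ) * (t₀^i / S) = (k:ℝ)*E/A := by
    have : ∑ i ∈ Finset.range (k+1), (i:ℝ) * (t₀^i / S)
        = M / S := by
      rw [hMdef, Finset.sum_div]
      exact Finset.sum_congr rfl fun i _ => by ring
    rw [this, hM]
    field_simp
  have hEnt : ∑ i ∈ Finset.range (k+1), Real.negMulLog (t₀^i / S)
      = Real.log S - ((k:ℝ)*E/A) * Real.log t₀ := by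
    have hterm : ∀ i ∈ Finset.range (k+1), Real.negMulLog (t₀^i / S)
        = Real.log S * (t₀^i / S) - Real.log t₀ * ((i:ℝ) * (t₀^i / S)) := by
      intro i hi
      rw [Real.negMulLog, hlogb i hi]
      ring
    rw [Finset.sum_congr rfl hterm, Finset.sum_sub_distrib, ← Finset.mul_sum,
      ← Finset.mul_sum, h1, h2]
    ring
  refine ⟨?_, hEnt⟩
  intro a ha hsum hmean
  have hlt : Real.log t₀ < 0 := Real.log_neg ht0 ht1
  -- pointwise Gibbs
  have hpt : ∀ i ∈ Finset.range (k+1),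
      Real.negMulLog (a i) ≤ -(a i) * Real.log (t₀^i / S) + t₀^i / S - a i := by
    intro i _
    have hb : 0 < t₀^i / S := div_pos (pow_pos ht0 i) hS
    set b := t₀^i / S
    rcases eq_or_lt_of_le (ha i) with h | h
    · rw [← h]
      simp [Real.negMulLog]
      linarith
    · have hlog : Real.log (b / a i) ≤ b / a i - 1 :=
        Real.log_le_sub_one_of_pos (div_pos hb h)
      rw [Real.log_div hb.ne' h.ne'] at hlog
      have h2 : a i * (Real.log b - Real.log (a i)) ≤ b - a i := by
        calc a i * (Real.log b - Real.log (a i))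
            ≤ a i * (b / a i - 1) := by
              exact mul_le_mul_of_nonneg_left hlog h.le
          _ = b - a i := by field_simp
      rw [Real.negMulLog]
      nlinarith
  have hsum1 : ∑ i ∈ Finset.range (k+1), Real.negMulLog (a i)
      ≤ ∑ i ∈ Finset.range (k+1), (-(a i) * Real.log (t₀^i / S) + t₀^i / S - a i) :=
    Finset.sum_le_sum hpt
  have hsum2 : ∑ i ∈ Finset.range (k+1), (-(a i) * Real.log (t₀^i / S) + t₀^i / S - a i)
      = Real.log S - Real.log t₀ * ∑ i ∈ Finset.range (k+1), (i:ℝ) * a i := by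
    have hterm : ∀ i ∈ Finset.range (k+1),
        -(a i) * Real.log (t₀^i / S) + t₀^i / S - a i
        = (Real.log S * a i - Real.log t₀ * ((i:ℝ) * a i)) + (t₀^i / S) - a i := by
      intro i hi
      rw [hlogb i hi]; ring
    rw [Finset.sum_congr rfl hterm, Finset.sum_sub_distrib, Finset.sum_add_distrib,
      Finset.sum_sub_distrib, ← Finset.mul_sum, ← Finset.mul_sum, h1, hsum]
    ring
  have hT : ∑ i ∈ Finset.range (k+1), (i:ℝ) * a i ≤ (k:ℝ)*E/A := by
    have hmm : ∑ i ∈ Finset.range (k+1), ((i:ℝ) * A / (k:ℝ)) * a i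
        = (A / k) * ∑ i ∈ Finset.range (k+1), (i:ℝ) * a i := by
      rw [Finset.mul_sum]
      exact Finset.sum_congr rfl fun i _ => by ring
    rw [hmm, div_mul_eq_mul_div, div_le_iff₀ hk0] at hmean
    rw [le_div_iff₀ hA]
    nlinarith [hmean]
  calc ∑ i ∈ Finset.range (k+1), Real.negMulLog (a i)
      ≤ Real.log S - Real.log t₀ * ∑ i ∈ Finset.range (k+1), (i:ℝ) * a i := by
        rw [← hsum2]; exact hsum1
    _ ≤ Real.log S - ((k:ℝ)*E/A) * Real.log t₀ := by nlinarith
    _ = _ := hEnt.symm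
end

section
/- Let (p_{j,i}), 1 ≤ j ≤ ℓ, 1 ≤ i ≤ k, satisfy p_{j,i} ≥ 0 and Σ_{j=1}^{ℓ} p_{j,i} = 1 for each i; let q_{i,j} > 0 for all pairs (i,j) with p_{j,i} > 0; let x₁, …, x_k and E be reals. Define w_i = Π_{j: p_{j,i}>0} q_{i,j}^{p_{j,i}}. Suppose ν ∈ ℝ satisfies Σ_i x_i w_i e^{−ν x_i} = E · Σ_i w_i e^{−ν x_i}, and set a*_i = w_i e^{−ν x_i} / Σ_{i'} w_{i'} e^{−ν x_{i'}}. Then for every probability vector (a_i) (a_i ≥ 0, Σ_i a_i = 1) with Σ_i x_i a_i = E, one has Σ_{i,j} a_i p_{j,i} log(q_{i,j}/a_i) ≤ Σ_{i,j} a*_i p_{j,i} log(q_{i,j}/a*_i). -/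
/-- Optimality of the input-distribution update of the Blahut–Arimoto algorithm under an
average constraint: with the reverse transition matrix `q` fixed,
`w_i = Π_{j: p_{j,i}>0} q_{i,j}^{p_{j,i}}` and `ν` chosen so that the exponentially tilted
distribution `a*_i ∝ w_i e^{−ν x_i}` has mean `E`, the distribution `a*` maximizes
`Σ_{(i,j): p_{j,i}>0} a_i p_{j,i} log(q_{i,j}/a_i)` over all probability vectors `a`
with `Σ_i x_i a_i = E` (convention `0·log 0 = 0`). -/
theorem stmt_9 (k ℓ : ℕ) (p : Fin ℓ → Fin k → ℝ)
    (hp : ∀ j i, 0 ≤ p j i) (hpsum : ∀ i, ∑ j, p j i = 1)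
    (q : Fin k → Fin ℓ → ℝ) (hq : ∀ i j, 0 < p j i → 0 < q i j)
    (x : Fin k → ℝ) (E : ℝ) (w : Fin k → ℝ)
    (hw : ∀ i, w i = ∏ j ∈ Finset.univ.filter (fun j => 0 < p j i), q i j ^ (p j i))
    (ν : ℝ)
    (hν : ∑ i, x i * w i * Real.exp (-ν * x i) = E * ∑ i, w i * Real.exp (-ν * x i))
    (astar : Fin k → ℝ)
    (hastar : ∀ i,
      astar i = w i * Real.exp (-ν * x i) / ∑ i', w i' * Real.exp (-ν * x i')) :
    ∀ a : Fin k → ℝ, (∀ i, 0 ≤ a i) → ∑ i, a i = 1 → ∑ i, x i * a i = E →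
      (∑ i, ∑ j ∈ Finset.univ.filter (fun j => 0 < p j i),
          a i * p j i * Real.log (q i j / a i))
        ≤ ∑ i, ∑ j ∈ Finset.univ.filter (fun j => 0 < p j i),
            astar i * p j i * Real.log (q i j / astar i) := by
  intro a ha hsum1 hmean
  have hk : Nonempty (Fin k) := by
    rcases isEmpty_or_nonempty (Fin k) with h | h
    · rw [Finset.univ_eq_empty, Finset.sum_empty] at hsum1; norm_num at hsum1
    · exact h
  set S := ∑ i', w i' * Real.exp (-ν * x i') with hSdef
  have hwpos : ∀ i, 0 < w i := by
    intro i
    rw [hw]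
    exact Finset.prod_pos fun j hj =>
      Real.rpow_pos_of_pos (hq i j (Finset.mem_filter.mp hj).2) _
  have hSpos : 0 < S :=
    Finset.sum_pos (fun i _ => mul_pos (hwpos i) (Real.exp_pos _)) Finset.univ_nonempty
  have hapos : ∀ i, 0 < astar i := fun i => by
    rw [hastar]; exact div_pos (mul_pos (hwpos i) (Real.exp_pos _)) hSpos
  have hasum : ∑ i, astar i = 1 := by
    simp only [hastar]
    rw [← Finset.sum_div, div_self hSpos.ne']
  have hamean : ∑ i, x i * astar i = E := by
    simp only [hastar]
    rw [show (∑ i, x i * (w i * Real.exp (-ν * x i) / S)) =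
        (∑ i, x i * w i * Real.exp (-ν * x i)) / S by
      rw [Finset.sum_div]; exact Finset.sum_congr rfl fun i _ => by ring]
    rw [hν, mul_div_assoc, div_self hSpos.ne', mul_one]
  have hpsumF : ∀ i, ∑ j ∈ Finset.univ.filter (fun j => 0 < p j i), p j i = 1 := by
    intro i
    rw [← hpsum i]
    apply Finset.sum_subset (Finset.filter_subset _ _)
    intro j _ hj
    simp only [Finset.mem_filter, Finset.mem_univ, true_and, not_lt] at hj
    exact le_antisymm hj (hp j i)
  have hlogw : ∀ i, Real.log (w i)
      = ∑ j ∈ Finset.univ.filter (fun j => 0 < p j i), p j i * Real.log (q i j) := by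
    intro i
    rw [hw, Real.log_prod (fun j hj =>
      (Real.rpow_pos_of_pos (hq i j (Finset.mem_filter.mp hj).2) _).ne')]
    exact Finset.sum_congr rfl fun j hj =>
      Real.log_rpow (hq i j (Finset.mem_filter.mp hj).2) _
  have inner : ∀ (i : Fin k) (b : ℝ), 0 ≤ b →
      ∑ j ∈ Finset.univ.filter (fun j => 0 < p j i), b * p j i * Real.log (q i j / b)
        = b * Real.log (w i) - b * Real.log b := by
    intro i b hb
    rcases hb.eq_or_lt with hb0 | hb0
    · subst hb0; simp
    · have hterm : ∀ j ∈ Finset.univ.filter (fun j => 0 < p j i),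
          b * p j i * Real.log (q i j / b)
            = b * (p j i * Real.log (q i j)) - (b * Real.log b) * p j i := by
        intro j hj
        rw [Real.log_div (hq i j (Finset.mem_filter.mp hj).2).ne' hb0.ne']
        ring
      rw [Finset.sum_congr rfl hterm, Finset.sum_sub_distrib, ← Finset.mul_sum,
        ← Finset.mul_sum, hpsumF i, mul_one, hlogw i]
  have hlogastar : ∀ i, Real.log (w i)
      = Real.log (astar i) + ν * x i + Real.log S := by
    intro i
    rw [hastar, Real.log_div (mul_pos (hwpos i) (Real.exp_pos _)).ne' hSpos.ne',
      Real.log_mul (hwpos i).ne' (Real.exp_pos _).ne', Real.log_exp]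
    ring
  rw [Finset.sum_congr rfl fun i _ => inner i (a i) (ha i),
    Finset.sum_congr rfl fun i _ => inner i (astar i) (hapos i).le]
  have hB : ∑ i, (astar i * Real.log (w i) - astar i * Real.log (astar i))
      = ν * E + Real.log S := by
    have h1 : ∀ i : Fin k,
        astar i * Real.log (w i) - astar i * Real.log (astar i)
          = ν * (x i * astar i) + Real.log S * astar i := by
      intro i
      rw [hlogastar i]; ring
    rw [Finset.sum_congr rfl fun i _ => h1 i, Finset.sum_add_distrib, ← Finset.mul_sum,
      ← Finset.mul_sum, hamean, hasum, mul_one]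
  have hKL : ∑ i, (a i * Real.log (astar i) - a i * Real.log (a i)) ≤ 0 := by
    have hterm : ∀ i ∈ (Finset.univ : Finset (Fin k)),
        a i * Real.log (astar i) - a i * Real.log (a i) ≤ astar i - a i := by
      intro i _
      rcases (ha i).eq_or_lt with h0 | h0
      · rw [← h0]; simpa using (hapos i).le
      · have hlog : Real.log (astar i) - Real.log (a i) ≤ astar i / a i - 1 := by
          rw [← Real.log_div (hapos i).ne' h0.ne']
          exact Real.log_le_sub_one_of_pos (div_pos (hapos i) h0)
        calc a i * Real.log (astar i) - a i * Real.log (a i)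
            = a i * (Real.log (astar i) - Real.log (a i)) := by ring
          _ ≤ a i * (astar i / a i - 1) := mul_le_mul_of_nonneg_left hlog h0.le
          _ = astar i - a i := by field_simp
    calc ∑ i, (a i * Real.log (astar i) - a i * Real.log (a i))
        ≤ ∑ i, (astar i - a i) := Finset.sum_le_sum hterm
      _ = 0 := by rw [Finset.sum_sub_distrib, hasum, hsum1, sub_self]
  have hA : ∑ i, (a i * Real.log (w i) - a i * Real.log (a i))
      ≤ ν * E + Real.log S := by
    have h1 : ∀ i : Fin k,
        a i * Real.log (w i) - a i * Real.log (a i)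
          = ν * (x i * a i) + Real.log S * a i
            + (a i * Real.log (astar i) - a i * Real.log (a i)) := by
      intro i
      rw [hlogastar i]; ring
    rw [Finset.sum_congr rfl fun i _ => h1 i, Finset.sum_add_distrib,
      Finset.sum_add_distrib, ← Finset.mul_sum, ← Finset.mul_sum, hmean, hsum1, mul_one]
    linarith [hKL]
  rw [hB]; exact hA
end

section
/- Fix E > 0 and σ > 0. Then the sequence s_n = (1/n)·log( [√n · (nE)^{n−1}/(n−1)!] · Γ((n+1)/2) / (π(n−1)σ²)^{(n−1)/2} ) converges to (1/2)·log( eE²/(2πσ²) ) as n → ∞. -/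
set_option maxHeartbeats 1000000

open Filter Real Stirling Topology

private lemma tendsto_log_nat_div' : Tendsto (fun n : ℕ => Real.log n / n) atTop (𝓝 0) :=
  Real.isLittleO_log_id_atTop.tendsto_div_nhds_zero.comp tendsto_natCast_atTop_atTop

private lemma small (u : ℕ → ℝ) (c : ℝ) (h : ∀ᶠ n : ℕ in atTop, |u n| ≤ c * (Real.log n + 1)) :
    Tendsto (fun n : ℕ => u n / n) atTop (𝓝 0) := by
  apply squeeze_zero_norm' (a := fun n : ℕ => c * (Real.log n + 1) / n)
  · filter_upwards [h, eventually_ge_atTop 1] with n hn hn1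
    have h0 : (0:ℝ) < n := by exact_mod_cast hn1
    rw [Real.norm_eq_abs, abs_div, abs_of_pos h0]
    gcongr
  · have h1 : Tendsto (fun n : ℕ => c * (Real.log n / n + 1 / n)) atTop (𝓝 (c * (0 + 0))) :=
      (tendsto_log_nat_div'.add tendsto_one_div_atTop_nhds_zero_nat).const_mul c
    have h2 : (fun n : ℕ => c * (Real.log n + 1) / n)
        = fun n : ℕ => c * (Real.log n / n + 1 / n) := by
      funext n; ring
    rw [h2]; simpa using h1

private lemma log_factorial_eq (k : ℕ) (hk : 1 ≤ k) :
    Real.log (Nat.factorial k : ℝ) = Real.log (stirlingSeq k) + 1/2 * Real.log (2*k)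
      + k * Real.log k - k := by
  have h := Stirling.log_stirlingSeq_formula k
  have hk0 : (0:ℝ) < k := by exact_mod_cast hk
  rw [Real.log_div (ne_of_gt hk0) (Real.exp_ne_zero 1), Real.log_exp] at h
  linarith

private lemma mm_tendsto : Tendsto (fun n : ℕ => (n-1)/2) atTop atTop := by
  apply tendsto_atTop_atTop.mpr
  intro b
  exact ⟨2*b+1, fun n hn => Nat.le_div_iff_mul_le (by norm_num) |>.mpr (by omega)⟩

noncomputable def errAux (n : ℕ) : ℝ :=
  (1/2) * Real.log n
  + ((n:ℝ)-1) * Real.log ((n:ℝ)/((n:ℝ)-1))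
  - (1/2) * Real.log (2*((n:ℝ)-1))
  + (1/2) * Real.log (2*((((n-1)/2 : ℕ)) : ℝ))
  + ((((n-1)/2 : ℕ):ℝ) * Real.log ((((n-1)/2 : ℕ)):ℝ)
      - (((n:ℝ)-1)/2) * Real.log (((n:ℝ)-1)/2))
  + (Real.log (Real.Gamma (((n:ℝ)+1)/2)) - Real.log ((Nat.factorial ((n-1)/2)) : ℝ))

private lemma abs_six (a b c d e f : ℝ) : |a + b - c + d + e + f| ≤ |a|+|b|+|c|+|d|+|e|+|f| := by
  calc |a + b - c + d + e + f| ≤ |a + b - c + d + e| + |f| := abs_add_le _ _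
    _ ≤ |a + b - c + d| + |e| + |f| := by linarith [abs_add_le (a+b-c+d) e]
    _ ≤ |a + b - c| + |d| + |e| + |f| := by linarith [abs_add_le (a+b-c) d]
    _ ≤ |a + b| + |c| + |d| + |e| + |f| := by linarith [abs_sub (a+b) c]
    _ ≤ |a|+|b|+|c|+|d|+|e|+|f| := by linarith [abs_add_le a b]

private lemma err_bound : ∀ᶠ n : ℕ in atTop, |errAux n| ≤ 4 * (Real.log n + 1) := by
  filter_upwards [eventually_ge_atTop 5] with n hn
  simp only [errAux]
  have hn5 : (5:ℝ) ≤ (n:ℝ) := by exact_mod_cast hn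
  have hN : (0:ℝ) < n := by linarith
  have hN1 : (0:ℝ) < (n:ℝ) - 1 := by linarith
  have hlogN : 0 ≤ Real.log n := Real.log_nonneg (by linarith)
  set m : ℕ := (n-1)/2 with hm
  clear_value m
  have hm2 : 2 ≤ m := by omega
  have h2m : 2*m ≤ n - 1 := by omega
  have h2m' : n - 1 ≤ 2*m + 1 := by omega
  have hM2 : (2:ℝ) ≤ (m:ℝ) := by exact_mod_cast hm2
  have hc : ((n-1:ℕ):ℝ) = (n:ℝ)-1 := by
    have h1n : (1:ℕ) ≤ n := by omega
    push_cast [h1n]; ring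
  have hMx : 2*(m:ℝ) ≤ (n:ℝ) - 1 := by
    have h := (Nat.cast_le (α := ℝ)).mpr h2m
    rw [hc] at h; push_cast at h; linarith
  have hxM : (n:ℝ) - 1 ≤ 2*(m:ℝ) + 1 := by
    have h := (Nat.cast_le (α := ℝ)).mpr h2m'
    rw [hc] at h; push_cast at h; linarith
  set x : ℝ := ((n:ℝ)-1)/2 with hxdef
  clear_value x
  have hx2 : (2:ℝ) ≤ x := by rw [hxdef]; linarith
  have hx0 : (0:ℝ) < x := by linarith
  have hM0 : (0:ℝ) < (m:ℝ) := by linarith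
  have hMlex : (m:ℝ) ≤ x := by rw [hxdef]; linarith
  have hxleM : x ≤ (m:ℝ) + 1/2 := by rw [hxdef]; linarith
  have hlogx0 : 0 ≤ Real.log x := Real.log_nonneg (by linarith)
  have hlogM0 : 0 ≤ Real.log (m:ℝ) := Real.log_nonneg (by linarith)
  -- t1
  have ht1 : |(1/2) * Real.log n| ≤ (1/2) * (Real.log n + 1) := by
    rw [abs_of_nonneg (by positivity)]; linarith
  -- t2
  have ht2 : |((n:ℝ)-1) * Real.log ((n:ℝ)/((n:ℝ)-1))| ≤ 1 := by
    have hpos : 0 ≤ Real.log ((n:ℝ)/((n:ℝ)-1)) :=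
      Real.log_nonneg ((le_div_iff₀ hN1).mpr (by linarith))
    have hle : Real.log ((n:ℝ)/((n:ℝ)-1)) ≤ (n:ℝ)/((n:ℝ)-1) - 1 :=
      Real.log_le_sub_one_of_pos (by positivity)
    have heq : (n:ℝ)/((n:ℝ)-1) - 1 = 1/((n:ℝ)-1) := by field_simp; ring
    rw [abs_of_nonneg (by positivity)]
    calc ((n:ℝ)-1) * Real.log ((n:ℝ)/((n:ℝ)-1)) ≤ ((n:ℝ)-1) * (1/((n:ℝ)-1)) := by
          rw [← heq]; exact mul_le_mul_of_nonneg_left hle hN1.le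
      _ = 1 := by field_simp
  -- t3
  have ht3 : |(1/2) * Real.log (2*((n:ℝ)-1))| ≤ Real.log n := by
    have h1 : 0 ≤ Real.log (2*((n:ℝ)-1)) := Real.log_nonneg (by linarith)
    have h2 : Real.log (2*((n:ℝ)-1)) ≤ Real.log ((n:ℝ)*(n:ℝ)) :=
      Real.log_le_log (by linarith) (by nlinarith)
    rw [Real.log_mul (ne_of_gt hN) (ne_of_gt hN)] at h2
    rw [abs_of_nonneg (by positivity)]; linarith
  -- t4
  have ht4 : |(1/2) * Real.log (2*(m:ℝ))| ≤ Real.log n := by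
    have h1 : 0 ≤ Real.log (2*(m:ℝ)) := Real.log_nonneg (by linarith)
    have h2 : Real.log (2*(m:ℝ)) ≤ Real.log n := Real.log_le_log (by linarith) (by linarith)
    rw [abs_of_nonneg (by positivity)]; linarith
  -- t5
  have ht5 : |(m:ℝ) * Real.log (m:ℝ) - x * Real.log x| ≤ (1/2) * Real.log n + 1/2 := by
    have hlogxN : Real.log x ≤ Real.log n := Real.log_le_log hx0 (by rw [hxdef]; linarith)
    have hlow : (m:ℝ) * Real.log (m:ℝ) ≤ x * Real.log x := by
      calc (m:ℝ) * Real.log (m:ℝ) ≤ (m:ℝ) * Real.log x :=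
            mul_le_mul_of_nonneg_left (Real.log_le_log hM0 hMlex) hM0.le
        _ ≤ x * Real.log x := mul_le_mul_of_nonneg_right hMlex hlogx0
    have e1 : Real.log x - Real.log (m:ℝ) ≤ (x - (m:ℝ))/(m:ℝ) := by
      have h := Real.log_le_sub_one_of_pos (show 0 < x/(m:ℝ) by positivity)
      rw [Real.log_div (ne_of_gt hx0) (ne_of_gt hM0)] at h
      have h2 : x/(m:ℝ) - 1 = (x - (m:ℝ))/(m:ℝ) := by field_simp
      linarith
    have e2 : (m:ℝ) * (Real.log x - Real.log (m:ℝ)) ≤ 1/2 := by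
      calc (m:ℝ) * (Real.log x - Real.log (m:ℝ)) ≤ (m:ℝ) * ((x - (m:ℝ))/(m:ℝ)) :=
            mul_le_mul_of_nonneg_left e1 hM0.le
        _ = x - (m:ℝ) := by field_simp
        _ ≤ 1/2 := by linarith
    have e3 : (x - (m:ℝ)) * Real.log x ≤ (1/2) * Real.log x :=
      mul_le_mul_of_nonneg_right (by linarith) hlogx0
    have hup : x * Real.log x - (m:ℝ) * Real.log (m:ℝ) ≤ (1/2) * Real.log x + 1/2 := by
      have hdec : x * Real.log x - (m:ℝ) * Real.log (m:ℝ)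
          = (x - (m:ℝ)) * Real.log x + (m:ℝ) * (Real.log x - Real.log (m:ℝ)) := by ring
      linarith
    rw [abs_sub_comm, abs_of_nonneg (by linarith)]
    linarith
  -- t6
  have hmem1 : ((m:ℝ)+1) ∈ Set.Ici (2:ℝ) := by simp only [Set.mem_Ici]; linarith
  have hmem2 : (((n:ℝ)+1)/2) ∈ Set.Ici (2:ℝ) := by simp only [Set.mem_Ici]; linarith
  have hmem3 : ((m:ℝ)+2) ∈ Set.Ici (2:ℝ) := by simp only [Set.mem_Ici]; linarith
  have hgl : Real.Gamma ((m:ℝ)+1) ≤ Real.Gamma (((n:ℝ)+1)/2) :=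
    Real.Gamma_strictMonoOn_Ici.monotoneOn hmem1 hmem2 (by linarith)
  have hgu : Real.Gamma (((n:ℝ)+1)/2) ≤ Real.Gamma ((m:ℝ)+2) :=
    Real.Gamma_strictMonoOn_Ici.monotoneOn hmem2 hmem3 (by linarith)
  have hfacm : Real.Gamma ((m:ℝ)+1) = (Nat.factorial m : ℝ) := Real.Gamma_nat_eq_factorial m
  have hfacm1 : Real.Gamma ((m:ℝ)+2) = (Nat.factorial (m+1) : ℝ) := by
    have h := Real.Gamma_nat_eq_factorial (m+1)
    push_cast at h
    rw [← h]; congr 1; ring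
  have hfacpos : (0:ℝ) < (Nat.factorial m : ℝ) := by exact_mod_cast m.factorial_pos
  have ht6 : |Real.log (Real.Gamma (((n:ℝ)+1)/2)) - Real.log ((Nat.factorial m) : ℝ)|
      ≤ Real.log n := by
    have hlb : Real.log ((Nat.factorial m) : ℝ) ≤ Real.log (Real.Gamma (((n:ℝ)+1)/2)) := by
      apply Real.log_le_log hfacpos; rw [← hfacm]; exact hgl
    have hub : Real.log (Real.Gamma (((n:ℝ)+1)/2)) ≤ Real.log ((Nat.factorial (m+1)) : ℝ) := by
      apply Real.log_le_log (Real.Gamma_pos_of_pos (by positivity))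
      rw [← hfacm1]; exact hgu
    have hsucc : ((Nat.factorial (m+1)) : ℝ) = ((m:ℝ)+1) * (Nat.factorial m : ℝ) := by
      push_cast [Nat.factorial_succ]; ring
    have hlogsucc : Real.log ((Nat.factorial (m+1)) : ℝ)
        = Real.log ((m:ℝ)+1) + Real.log (Nat.factorial m : ℝ) := by
      rw [hsucc, Real.log_mul (by positivity) (ne_of_gt hfacpos)]
    have hm1n : ((m:ℝ)+1) ≤ (n:ℝ) := by
      have h : m + 1 ≤ n := by omega
      exact_mod_cast h
    have hlogm1 : Real.log ((m:ℝ)+1) ≤ Real.log n := Real.log_le_log (by linarith) hm1n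
    rw [abs_of_nonneg (by linarith)]
    linarith
  refine le_trans (abs_six _ _ _ _ _ _) ?_
  linarith

noncomputable def Faux (E σ : ℝ) (n : ℕ) : ℝ :=
  (((n:ℝ)-1)/n) * Real.log E
  + (((n:ℝ)-1)/n)
  - ((((n-1)/2 : ℕ) : ℝ)/n)
  - ((((n:ℝ)-1)/(2*(n:ℝ))) * Real.log (2*Real.pi*σ^2))
  + ((1/(n:ℝ)) * Real.log (stirlingSeq ((n-1)/2)))
  - ((1/(n:ℝ)) * Real.log (stirlingSeq (n-1)))
  + (errAux n) / n

private lemma f_eq (E σ : ℝ) (hE : 0 < E) (hσ : 0 < σ) (n : ℕ) (hn : 5 ≤ n) :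
    (1 / (n : ℝ)) * Real.log
        (Real.sqrt n * ((n : ℝ) * E) ^ (n - 1) / (Nat.factorial (n - 1) : ℝ) *
          Real.Gamma (((n : ℝ) + 1) / 2) /
          (Real.pi * ((n : ℝ) - 1) * σ ^ 2) ^ (((n : ℝ) - 1) / 2)) = Faux E σ n := by
  have hn5 : (5:ℝ) ≤ (n:ℝ) := by exact_mod_cast hn
  have hN : (0:ℝ) < n := by linarith
  have hN1 : (0:ℝ) < (n:ℝ) - 1 := by linarith
  have hm1 : 1 ≤ (n-1)/2 := by omega
  have hM : (0:ℝ) < (((n-1)/2 : ℕ):ℝ) := by exact_mod_cast Nat.lt_of_lt_of_le Nat.zero_lt_one hm1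
  have hcast : ((n-1:ℕ):ℝ) = (n:ℝ)-1 := by
    have : (1:ℕ) ≤ n := by omega
    push_cast [this]; ring
  have hgam : 0 < Real.Gamma (((n:ℝ)+1)/2) := Real.Gamma_pos_of_pos (by positivity)
  have hfac : (0:ℝ) < (Nat.factorial (n-1) : ℝ) := by
    exact_mod_cast (n-1).factorial_pos
  have hB : (0:ℝ) < Real.pi * ((n:ℝ)-1) * σ^2 := by
    have := Real.pi_pos; positivity
  rw [Real.log_div (by positivity) (by positivity),
      Real.log_mul (by positivity) (ne_of_gt hgam),
      Real.log_div (by positivity) (ne_of_gt hfac),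
      Real.log_mul (by positivity) (by positivity),
      Real.log_sqrt hN.le, Real.log_pow,
      Real.log_mul (ne_of_gt hN) (ne_of_gt hE),
      Real.log_rpow hB,
      show Real.pi * ((n:ℝ)-1) * σ^2 = (2*Real.pi*σ^2) * (((n:ℝ)-1)/2) by ring,
      Real.log_mul (by have := Real.pi_pos; positivity) (by positivity)]
  unfold Faux errAux
  rw [log_factorial_eq (n-1) (by omega), log_factorial_eq ((n-1)/2) hm1, hcast,
      Real.log_div (ne_of_gt hN) (ne_of_gt hN1)]
  ring

private lemma tendsto_Faux (E σ : ℝ) :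
    Tendsto (Faux E σ) atTop
      (𝓝 (1 * Real.log E + 1 - 1/2 - 1/2 * Real.log (2*Real.pi*σ^2) + 0 - 0 + 0)) := by
  have h1 : Tendsto (fun n : ℕ => ((n:ℝ)-1)/n) atTop (𝓝 1) := by
    have h : Tendsto (fun n : ℕ => 1 - 1/(n:ℝ)) atTop (𝓝 (1 - 0)) :=
      tendsto_const_nhds.sub tendsto_one_div_atTop_nhds_zero_nat
    rw [sub_zero] at h
    refine Tendsto.congr' ?_ h
    filter_upwards [eventually_ge_atTop 1] with n hn
    have h0 : ((n:ℝ)) ≠ 0 := by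
      have : (0:ℕ) < n := hn
      exact_mod_cast this.ne'
    field_simp
  have h2 : Tendsto (fun n : ℕ => ((((n-1)/2 : ℕ):ℝ))/n) atTop (𝓝 (1/2)) := by
    have hlow : Tendsto (fun n : ℕ => 1/2 - 1/(n:ℝ)) atTop (𝓝 (1/2 - 0)) :=
      tendsto_const_nhds.sub tendsto_one_div_atTop_nhds_zero_nat
    rw [sub_zero] at hlow
    refine tendsto_of_tendsto_of_tendsto_of_le_of_le' hlow tendsto_const_nhds ?_ ?_
    · filter_upwards [eventually_ge_atTop 2] with n hn
      have hN : (0:ℝ) < n := by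
        have : (0:ℕ) < n := by omega
        exact_mod_cast this
      have hnat : n - 2 ≤ 2*((n-1)/2) := by omega
      have hcast : ((n:ℝ)) - 2 ≤ 2*(((n-1)/2 : ℕ):ℝ) := by
        have h := (Nat.cast_le (α := ℝ)).mpr hnat
        have hc : ((n-2:ℕ):ℝ) = (n:ℝ)-2 := by
          have h2n : (2:ℕ) ≤ n := hn
          push_cast [h2n]; ring
        rw [hc] at h; push_cast at h; linarith
      rw [le_div_iff₀ hN]
      have hexp : (1/2 - 1/(n:ℝ)) * n = (n:ℝ)/2 - 1 := by field_simp
      rw [hexp]; linarith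
    · filter_upwards [eventually_ge_atTop 2] with n hn
      have hN : (0:ℝ) < n := by
        have : (0:ℕ) < n := by omega
        exact_mod_cast this
      have hnat : 2*((n-1)/2) ≤ n := by omega
      have hcast : 2*(((n-1)/2 : ℕ):ℝ) ≤ (n:ℝ) := by exact_mod_cast hnat
      rw [div_le_iff₀ hN]
      linarith
  have h3 : Tendsto (fun n : ℕ => (((n:ℝ)-1)/(2*(n:ℝ)))) atTop (𝓝 (1/2)) := by
    have h : Tendsto (fun n : ℕ => 1/2 - (1/2)*(1/(n:ℝ))) atTop (𝓝 (1/2 - (1/2)*0)) :=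
      tendsto_const_nhds.sub (tendsto_one_div_atTop_nhds_zero_nat.const_mul (1/2))
    rw [mul_zero, sub_zero] at h
    refine Tendsto.congr' ?_ h
    filter_upwards [eventually_ge_atTop 1] with n hn
    have h0 : ((n:ℝ)) ≠ 0 := by
      have : (0:ℕ) < n := hn
      exact_mod_cast this.ne'
    field_simp
  have hlog : ContinuousAt Real.log (Real.sqrt Real.pi) :=
    Real.continuousAt_log (ne_of_gt (Real.sqrt_pos.mpr Real.pi_pos))
  have h4 : Tendsto (fun n : ℕ => (1/(n:ℝ)) * Real.log (stirlingSeq ((n-1)/2)))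
      atTop (𝓝 0) := by
    have hs : Tendsto (fun n : ℕ => Real.log (stirlingSeq ((n-1)/2))) atTop
        (𝓝 (Real.log (Real.sqrt Real.pi))) :=
      hlog.tendsto.comp (tendsto_stirlingSeq_sqrt_pi.comp mm_tendsto)
    have h := tendsto_one_div_atTop_nhds_zero_nat.mul hs
    simpa using h
  have h5 : Tendsto (fun n : ℕ => (1/(n:ℝ)) * Real.log (stirlingSeq (n-1)))
      atTop (𝓝 0) := by
    have hs : Tendsto (fun n : ℕ => Real.log (stirlingSeq (n-1))) atTop
        (𝓝 (Real.log (Real.sqrt Real.pi))) :=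
      hlog.tendsto.comp (tendsto_stirlingSeq_sqrt_pi.comp (tendsto_sub_atTop_nat 1))
    have h := tendsto_one_div_atTop_nhds_zero_nat.mul hs
    simpa using h
  have h6 : Tendsto (fun n : ℕ => errAux n / n) atTop (𝓝 0) := small errAux 4 err_bound
  exact ((((((h1.mul_const (Real.log E)).add h1).sub h2).sub
    (h3.mul_const (Real.log (2*Real.pi*σ^2)))).add h4).sub h5).add h6

/-- Sphere packing in a simplex: for `E > 0` and `σ > 0`, the normalized log-ratio of the
volume of the regular simplex `{x ∈ ℝⁿ₊ : Σ xᵢ = nE}` to the volume of an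
`(n−1)`-dimensional ball of radius `√((n−1)σ²)` converges to `(1/2) log(eE²/(2πσ²))`. -/
theorem stmt_10 (E σ : ℝ) (hE : 0 < E) (hσ : 0 < σ) :
    Tendsto (fun n : ℕ =>
      (1 / (n : ℝ)) * Real.log
        (Real.sqrt n * ((n : ℝ) * E) ^ (n - 1) / (Nat.factorial (n - 1) : ℝ) *
          Real.Gamma (((n : ℝ) + 1) / 2) /
          (Real.pi * ((n : ℝ) - 1) * σ ^ 2) ^ (((n : ℝ) - 1) / 2)))
      atTop
      (nhds ((1 / 2) * Real.log (Real.exp 1 * E ^ 2 / (2 * Real.pi * σ ^ 2)))) := by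
  have hmain := tendsto_Faux E σ
  have hL : (1/2 : ℝ) * Real.log (Real.exp 1 * E^2/(2*Real.pi*σ^2))
      = 1 * Real.log E + 1 - 1/2 - 1/2 * Real.log (2*Real.pi*σ^2) + 0 - 0 + 0 := by
    have hpi := Real.pi_pos
    rw [Real.log_div (by positivity) (by positivity),
        Real.log_mul (Real.exp_ne_zero 1) (by positivity),
        Real.log_exp, Real.log_pow]
    push_cast; ring
  rw [hL]
  refine Tendsto.congr' ?_ hmain
  filter_upwards [eventually_ge_atTop 5] with n hn
  exact (f_eq E σ hE hσ n hn).symm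
end

section
/- Let μ ∈ ℝ, ν > 0, A > 0, φ(x) = (1/(√(2π)ν)) exp(−(x−μ)²/(2ν²)), and η = (∫₀^A φ(x) dx)^{-1}. Then the differential entropy of the truncated-Gaussian density ηφ on [0, A] equals −∫₀^A ηφ(x) log(ηφ(x)) dx = (1/2) log(2πeν²) − log η − (η/2)·( (A − μ)φ(A) + μφ(0) ). -/
/-- Differential entropy of the truncated-Gaussian density: with `φ` the Gaussian density
of mean `μ` and standard deviation `ν`, and `η = (∫₀^A φ)⁻¹`, the differential entropy of
`ηφ` on `[0, A]` equals `(1/2) log(2πeν²) − log η − (η/2)((A − μ)φ(A) + μφ(0))`. -/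
theorem stmt_14 (μ ν A : ℝ) (hν : 0 < ν) (hA : 0 < A)
    (φ : ℝ → ℝ)
    (hφ : ∀ x, φ x = 1 / (Real.sqrt (2 * Real.pi) * ν) * Real.exp (-(x - μ) ^ 2 / (2 * ν ^ 2)))
    (η : ℝ) (hη : η = (∫ x in (0 : ℝ)..A, φ x)⁻¹) :
    -(∫ x in (0 : ℝ)..A, η * φ x * Real.log (η * φ x))
      = 1 / 2 * Real.log (2 * Real.pi * Real.exp 1 * ν ^ 2) - Real.log η
        - η / 2 * ((A - μ) * φ A + μ * φ 0) := by
  have hπ : (0:ℝ) < 2 * Real.pi := by positivity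
  have hsq : (0:ℝ) < Real.sqrt (2 * Real.pi) := Real.sqrt_pos.mpr hπ
  have hC : (0:ℝ) < 1 / (Real.sqrt (2 * Real.pi) * ν) := by positivity
  set L : ℝ := Real.log (1 / (Real.sqrt (2 * Real.pi) * ν)) with hL
  have hφpos : ∀ x, 0 < φ x := by
    intro x; rw [hφ]; positivity
  have hφeq : φ = fun x => 1 / (Real.sqrt (2 * Real.pi) * ν) *
      Real.exp (-(x - μ) ^ 2 / (2 * ν ^ 2)) := funext hφ
  have hφcont : Continuous φ := by
    rw [hφeq]
    exact continuous_const.mul (Real.continuous_exp.comp (by continuity))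
  have hcpos : (0:ℝ) < ∫ x in (0:ℝ)..A, φ x := by
    apply intervalIntegral.intervalIntegral_pos_of_pos_on
      (hφcont.intervalIntegrable _ _) (fun x _ => hφpos x) hA
  set c : ℝ := ∫ x in (0:ℝ)..A, φ x with hc_def
  have hηpos : 0 < η := by rw [hη]; exact inv_pos.mpr hcpos
  have hηc : η * c = 1 := by rw [hη]; field_simp
  -- derivative of φ
  have hφdv : ∀ x, HasDerivAt φ (-(x - μ) / ν ^ 2 * φ x) x := by
    intro x
    have h1 : HasDerivAt (fun x : ℝ => -(x - μ) ^ 2 / (2 * ν ^ 2)) (-(x - μ) / ν ^ 2) x := by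
      have hid : HasDerivAt (fun x : ℝ => x - μ) 1 x := (hasDerivAt_id x).sub_const μ
      have h2 := ((hid.pow 2).neg).div_const (2 * ν ^ 2)
      refine h2.congr_deriv ?_
      field_simp
      ring
    have h3 := (h1.exp).const_mul (1 / (Real.sqrt (2 * Real.pi) * ν))
    rw [← hφeq] at h3
    refine h3.congr_deriv ?_
    rw [hφ]; ring
  -- FTC for the second moment
  have hF : ∀ x ∈ Set.uIcc (0:ℝ) A, HasDerivAt (fun x => -ν ^ 2 * (x - μ) * φ x)
      ((x - μ) ^ 2 * φ x - ν ^ 2 * φ x) x := by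
    intro x _
    have h1 : HasDerivAt (fun x : ℝ => -ν ^ 2 * (x - μ)) (-ν ^ 2) x := by
      simpa using ((hasDerivAt_id x).sub_const μ).const_mul (-ν ^ 2)
    have h2 := h1.mul (hφdv x)
    refine h2.congr_deriv ?_
    field_simp
    ring
  have hcont2 : Continuous fun x : ℝ => (x - μ) ^ 2 * φ x :=
    (((continuous_id.sub continuous_const).pow 2).mul hφcont)
  have hgint : (∫ x in (0:ℝ)..A, ((x - μ) ^ 2 * φ x - ν ^ 2 * φ x))
      = (-ν ^ 2 * (A - μ) * φ A) - (-ν ^ 2 * (0 - μ) * φ 0) :=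
    intervalIntegral.integral_eq_sub_of_hasDerivAt hF
      ((hcont2.sub (continuous_const.mul hφcont)).intervalIntegrable _ _)
  have hsub : (∫ x in (0:ℝ)..A, ((x - μ) ^ 2 * φ x - ν ^ 2 * φ x))
      = (∫ x in (0:ℝ)..A, (x - μ) ^ 2 * φ x) - ν ^ 2 * c := by
    rw [intervalIntegral.integral_sub (g := fun x => ν ^ 2 * φ x) (hcont2.intervalIntegrable _ _)
      ((continuous_const.mul hφcont).intervalIntegrable _ _),
      intervalIntegral.integral_const_mul]
  have hI : (∫ x in (0:ℝ)..A, (x - μ) ^ 2 * φ x)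
      = ν ^ 2 * c - ν ^ 2 * ((A - μ) * φ A + μ * φ 0) := by
    have := hgint
    rw [hsub] at this
    linarith
  -- rewrite the entropy integrand
  have hlog : ∀ x, η * φ x * Real.log (η * φ x)
      = (η * (Real.log η + L)) * φ x + (-(η / (2 * ν ^ 2))) * ((x - μ) ^ 2 * φ x) := by
    intro x
    have h1 : Real.log (η * φ x) = Real.log η + (L + -(x - μ) ^ 2 / (2 * ν ^ 2)) := by
      rw [Real.log_mul hηpos.ne' (hφpos x).ne', hφ x,
        Real.log_mul hC.ne' (Real.exp_pos _).ne', Real.log_exp, hL]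
    rw [h1]
    have : (ν:ℝ) ^ 2 ≠ 0 := by positivity
    field_simp
    ring
  have hmain : (∫ x in (0:ℝ)..A, η * φ x * Real.log (η * φ x))
      = (η * (Real.log η + L)) * c + (-(η / (2 * ν ^ 2))) * (∫ x in (0:ℝ)..A, (x - μ) ^ 2 * φ x) := by
    rw [intervalIntegral.integral_congr (fun x _ => hlog x),
      intervalIntegral.integral_add (f := fun x => η * (Real.log η + L) * φ x)
        (g := fun x => -(η / (2 * ν ^ 2)) * ((x - μ) ^ 2 * φ x))
        ((continuous_const.mul hφcont).intervalIntegrable _ _)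
        ((continuous_const.mul hcont2).intervalIntegrable _ _),
      intervalIntegral.integral_const_mul, intervalIntegral.integral_const_mul]
  -- log identities
  have hL2 : L = -(1 / 2 * Real.log (2 * Real.pi) + Real.log ν) := by
    rw [hL, one_div, Real.log_inv, Real.log_mul hsq.ne' hν.ne', Real.log_sqrt hπ.le]
    ring
  have hM : Real.log (2 * Real.pi * Real.exp 1 * ν ^ 2)
      = Real.log (2 * Real.pi) + 1 + 2 * Real.log ν := by
    rw [Real.log_mul (by positivity) (by positivity), Real.log_mul hπ.ne' (Real.exp_pos 1).ne',
      Real.log_exp, Real.log_pow]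
    push_cast
    ring
  rw [hmain, hI, hM, hL2]
  have hν2 : (ν:ℝ) ^ 2 ≠ 0 := by positivity
  field_simp
  linear_combination ((1 - 2 * Real.log η + 2 * Real.log ν + Real.log (2 * Real.pi))) * hηc
end

section
/- Let n ≥ 1 be an integer, A > 0, and 1 ≥ a₁ ≥ a₂ ≥ ⋯ ≥ a_n ≥ 0; set a₀ = 1 and a_{n+1} = 0. Let X = (X₁, …, X_n) be the random vector that, for each i ∈ {0, 1, …, n}, takes with probability a_i − a_{i+1} the value whose first i coordinates equal A and whose remaining coordinates equal 0. Then P(X_j = A) = a_j for every j, and for every g ∈ ℝⁿ, Var( Σ_{j=1}^{n} g_j X_j ) = A² · Σ_{j=1}^{n} Σ_{k=1}^{n} g_j g_k · min(a_j, a_k) · (1 − max(a_j, a_k)). -/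
/-- Maximally-correlated binary random vector: with `a₀ = 1 ≥ a₁ ≥ ⋯ ≥ a_n ≥ 0 = a_{n+1}`,
the random vector that with probability `a_i − a_{i+1}` has its first `i` coordinates equal
to `A` and the rest equal to `0` satisfies `P(X_j = A) = a_j` for all `j`, and for every
`g ∈ ℝⁿ`, `Var(Σ_j g_j X_j) = A² Σ_j Σ_l g_j g_l min(a_j, a_l)(1 − max(a_j, a_l))`. -/
theorem stmt_15 (n : ℕ) (hn : 1 ≤ n) (A : ℝ) (hA : 0 < A) (a : ℕ → ℝ)
    (ha0 : a 0 = 1) (han : a (n + 1) = 0) (hmono : ∀ i ≤ n, a (i + 1) ≤ a i) :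
    (∀ j, 1 ≤ j → j ≤ n →
      (∑ i ∈ Finset.range (n + 1),
        if (if j ≤ i then A else 0) = A then a i - a (i + 1) else 0) = a j) ∧
    ∀ g : ℕ → ℝ,
      (∑ i ∈ Finset.range (n + 1),
          (a i - a (i + 1)) *
            (∑ j ∈ Finset.Icc 1 n, g j * (if j ≤ i then A else 0)) ^ 2)
        - (∑ i ∈ Finset.range (n + 1),
            (a i - a (i + 1)) *
              (∑ j ∈ Finset.Icc 1 n, g j * (if j ≤ i then A else 0))) ^ 2
      = A ^ 2 * ∑ j ∈ Finset.Icc 1 n, ∑ l ∈ Finset.Icc 1 n,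
          g j * g l * min (a j) (a l) * (1 - max (a j) (a l)) := by
  -- antitonicity of a on [0, n+1]
  have hanti : ∀ p q : ℕ, p ≤ q → q ≤ n + 1 → a q ≤ a p := by
    intro p q hpq hq
    induction q with
    | zero => simp_all
    | succ m ih =>
      rcases Nat.lt_or_ge p (m + 1) with h | h
      · exact le_trans (hmono m (Nat.lt_succ_iff.mp hq))
          (ih (Nat.lt_succ_iff.mp h) (le_trans (Nat.le_succ m) hq))
      · have : p = m + 1 := le_antisymm hpq h
        rw [this]
  -- telescoping
  have htel : ∀ j : ℕ, j ≤ n + 1 →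
      (∑ i ∈ Finset.range (n + 1), (if j ≤ i then a i - a (i + 1) else 0)) = a j := by
    intro j hj
    rw [← Finset.sum_filter]
    have hfil : Finset.filter (fun i => j ≤ i) (Finset.range (n + 1)) = Finset.Ico j (n + 1) := by
      ext i
      simp [Finset.mem_filter, Finset.mem_range, Finset.mem_Ico, and_comm]
    rw [hfil, Finset.sum_Ico_eq_sub _ hj, Finset.sum_range_sub' a, Finset.sum_range_sub' a,
      ha0, han]
    ring
  have key1 : ∀ j : ℕ, j ≤ n + 1 →
      (∑ i ∈ Finset.range (n + 1), (a i - a (i + 1)) * (if j ≤ i then A else 0)) = A * a j := by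
    intro j hj
    rw [← htel j hj, Finset.mul_sum]
    refine Finset.sum_congr rfl fun i _ => ?_
    split_ifs <;> ring
  have key2 : ∀ j l : ℕ, j ≤ n + 1 → l ≤ n + 1 →
      (∑ i ∈ Finset.range (n + 1),
        (a i - a (i + 1)) * ((if j ≤ i then A else 0) * (if l ≤ i then A else 0)))
      = A ^ 2 * a (max j l) := by
    intro j l hj hl
    rw [← htel (max j l) (max_le hj hl), Finset.mul_sum]
    refine Finset.sum_congr rfl fun i _ => ?_
    by_cases h1 : j ≤ i <;> by_cases h2 : l ≤ i <;>
      simp [h1, h2, max_le_iff] <;> ring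
  constructor
  · intro j hj1 hjn
    have hcond : ∀ i : ℕ,
        (if (if j ≤ i then A else 0) = A then a i - a (i + 1) else 0)
        = (if j ≤ i then a i - a (i + 1) else 0) := by
      intro i
      by_cases h : j ≤ i
      · simp [h]
      · simp [h, hA.ne, hA.ne']
    simp_rw [hcond]
    exact htel j (le_trans hjn (Nat.le_succ n))
  · intro g
    have e1 : (∑ i ∈ Finset.range (n + 1),
          (a i - a (i + 1)) *
            (∑ j ∈ Finset.Icc 1 n, g j * (if j ≤ i then A else 0)) ^ 2)
        = ∑ j ∈ Finset.Icc 1 n, ∑ l ∈ Finset.Icc 1 n,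
            g j * g l * (A ^ 2 * a (max j l)) := by
      have hsq : ∀ i : ℕ, (∑ j ∈ Finset.Icc 1 n, g j * (if j ≤ i then A else 0)) ^ 2
          = ∑ j ∈ Finset.Icc 1 n, ∑ l ∈ Finset.Icc 1 n,
              (g j * g l) * ((if j ≤ i then A else 0) * (if l ≤ i then A else 0)) := by
        intro i
        rw [sq, Finset.sum_mul_sum]
        exact Finset.sum_congr rfl fun j _ => Finset.sum_congr rfl fun l _ => by ring
      simp_rw [hsq, Finset.mul_sum]
      rw [Finset.sum_comm]
      refine Finset.sum_congr rfl fun j hj => ?_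
      rw [Finset.sum_comm]
      refine Finset.sum_congr rfl fun l hl => ?_
      have hj' : j ≤ n + 1 := le_trans (Finset.mem_Icc.mp hj).2 (Nat.le_succ n)
      have hl' : l ≤ n + 1 := le_trans (Finset.mem_Icc.mp hl).2 (Nat.le_succ n)
      rw [← key2 j l hj' hl', Finset.mul_sum]
      exact Finset.sum_congr rfl fun i _ => by ring
    have e2 : (∑ i ∈ Finset.range (n + 1),
          (a i - a (i + 1)) * (∑ j ∈ Finset.Icc 1 n, g j * (if j ≤ i then A else 0)))
        = ∑ j ∈ Finset.Icc 1 n, g j * (A * a j) := by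
      simp_rw [Finset.mul_sum]
      rw [Finset.sum_comm]
      refine Finset.sum_congr rfl fun j hj => ?_
      have hj' : j ≤ n + 1 := le_trans (Finset.mem_Icc.mp hj).2 (Nat.le_succ n)
      rw [← key1 j hj', Finset.mul_sum]
      exact Finset.sum_congr rfl fun i _ => by ring
    rw [e1, e2, pow_two (∑ j ∈ Finset.Icc 1 n, g j * (A * a j)), Finset.sum_mul_sum, Finset.mul_sum, ← Finset.sum_sub_distrib]
    refine Finset.sum_congr rfl fun j hj => ?_
    rw [Finset.mul_sum, ← Finset.sum_sub_distrib]
    refine Finset.sum_congr rfl fun l hl => ?_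
    have hjn : j ≤ n := (Finset.mem_Icc.mp hj).2
    have hln : l ≤ n := (Finset.mem_Icc.mp hl).2
    rcases le_total j l with h | h
    · have h1 : a l ≤ a j := hanti j l h (le_trans hln (Nat.le_succ n))
      rw [max_eq_right h, min_eq_right h1, max_eq_left h1]
      ring
    · have h1 : a j ≤ a l := hanti l j h (le_trans hjn (Nat.le_succ n))
      rw [max_eq_left h, min_eq_left h1, max_eq_right h1]
      ring
end

section
/- Let n ≥ 1 be an integer, A > 0, a₁, …, a_n ∈ [0, 1], and g₁, …, g_n ≥ 0. If X = (X₁, …, X_n) is a random vector with 0 ≤ X_i ≤ A almost surely and E[X_i] = a_i A for every i, then Var( Σ_{i=1}^{n} g_i X_i ) ≤ A² · Σ_{i=1}^{n} Σ_{j=1}^{n} g_i g_j · min(a_i, a_j) · (1 − max(a_i, a_j)). -/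
open MeasureTheory ProbabilityTheory

/-- Maximum-variance inequality for bounded nonnegative random vectors: if
`0 ≤ X_i ≤ A` almost surely and `E[X_i] = a_i A`, and `g_i ≥ 0`, then
`Var(Σ_i g_i X_i) ≤ A² Σ_i Σ_j g_i g_j min(a_i, a_j)(1 − max(a_i, a_j))`. -/
theorem stmt_16 (n : ℕ) (hn : 1 ≤ n) (A : ℝ) (hA : 0 < A)
    (a g : Fin n → ℝ) (ha : ∀ i, a i ∈ Set.Icc (0 : ℝ) 1) (hg : ∀ i, 0 ≤ g i)
    {Ω : Type*} [MeasurableSpace Ω] (P : Measure Ω) [IsProbabilityMeasure P]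
    (X : Fin n → Ω → ℝ) (hXm : ∀ i, AEMeasurable (X i) P)
    (hXb : ∀ i, ∀ᵐ ω ∂P, X i ω ∈ Set.Icc 0 A)
    (hXE : ∀ i, (∫ ω, X i ω ∂P) = a i * A) :
    variance (fun ω => ∑ i, g i * X i ω) P
      ≤ A ^ 2 * ∑ i, ∑ j, g i * g j * min (a i) (a j) * (1 - max (a i) (a j)) := by
  have hXint : ∀ i, Integrable (X i) P := fun i =>
    (integrable_const A).mono' (hXm i).aestronglyMeasurable ((hXb i).mono fun ω h => by
      rw [Real.norm_eq_abs, abs_of_nonneg h.1]; exact h.2)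
  have hXXint : ∀ i j, Integrable (fun ω => X i ω * X j ω) P := fun i j =>
    (integrable_const (A * A)).mono' ((hXm i).mul (hXm j)).aestronglyMeasurable
      (((hXb i).and (hXb j)).mono fun ω h => by
        rw [Real.norm_eq_abs, abs_of_nonneg (mul_nonneg h.1.1 h.2.1)]
        exact mul_le_mul h.1.2 h.2.2 h.2.1 hA.le)
  have hYmeas : AEStronglyMeasurable (fun ω => ∑ i, g i * X i ω) P :=
    (Finset.aemeasurable_fun_sum _ fun i _ => (hXm i).const_mul _).aestronglyMeasurable
  have hYbound : ∀ᵐ ω ∂P, ‖∑ i, g i * X i ω‖ ≤ ∑ i, g i * A := by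
    filter_upwards [ae_all_iff.2 hXb] with ω hω
    calc ‖∑ i, g i * X i ω‖ ≤ ∑ i, ‖g i * X i ω‖ := norm_sum_le _ _
    _ ≤ ∑ i, g i * A := Finset.sum_le_sum fun i _ => by
        rw [Real.norm_eq_abs, abs_of_nonneg (mul_nonneg (hg i) (hω i).1)]
        exact mul_le_mul_of_nonneg_left (hω i).2 (hg i)
  have hYL2 : MemLp (fun ω => ∑ i, g i * X i ω) 2 P := MemLp.of_bound hYmeas _ hYbound
  rw [variance_eq_sub hYL2]
  have hEY : (∫ ω, ∑ i, g i * X i ω ∂P) = ∑ i, g i * (a i * A) := by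
    rw [integral_finset_sum _ fun i _ => (hXint i).const_mul _]
    simp_rw [integral_const_mul, hXE]
  have hEY2 : (∫ ω, ((fun ω => ∑ i, g i * X i ω) ^ 2) ω ∂P)
      = ∑ i, ∑ j, g i * g j * ∫ ω, X i ω * X j ω ∂P := by
    have h1 : ∀ ω, ((fun ω => ∑ i, g i * X i ω) ^ 2) ω
        = ∑ i, ∑ j, g i * g j * (X i ω * X j ω) := by
      intro ω
      simp only [Pi.pow_apply, sq, Finset.sum_mul_sum]
      exact Finset.sum_congr rfl fun i _ => Finset.sum_congr rfl fun j _ => by ring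
    simp_rw [h1]
    rw [integral_finset_sum _ fun i _ =>
      integrable_finset_sum _ fun j _ => (hXXint i j).const_mul _]
    exact Finset.sum_congr rfl fun i _ => by
      rw [integral_finset_sum _ fun j _ => (hXXint i j).const_mul _]
      exact Finset.sum_congr rfl fun j _ => integral_const_mul _ _
  rw [hEY2, hEY, sq, Finset.sum_mul_sum, Finset.mul_sum, ← Finset.sum_sub_distrib]
  refine Finset.sum_le_sum fun i _ => ?_
  rw [Finset.mul_sum, ← Finset.sum_sub_distrib]
  refine Finset.sum_le_sum fun j _ => ?_
  -- termwise bound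
  have hcov : (∫ ω, X i ω * X j ω ∂P) ≤ A ^ 2 * min (a i) (a j) := by
    have h1 : (∫ ω, X i ω * X j ω ∂P) ≤ A ^ 2 * a i := by
      have : (∫ ω, X i ω * X j ω ∂P) ≤ ∫ ω, A * X i ω ∂P := by
        refine integral_mono_ae (hXXint i j) ((hXint i).const_mul _) ?_
        filter_upwards [hXb i, hXb j] with ω hi hj
        calc X i ω * X j ω ≤ X i ω * A := mul_le_mul_of_nonneg_left hj.2 hi.1
        _ = A * X i ω := mul_comm _ _
      rw [integral_const_mul, hXE] at this
      nlinarith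
    have h2 : (∫ ω, X i ω * X j ω ∂P) ≤ A ^ 2 * a j := by
      have : (∫ ω, X i ω * X j ω ∂P) ≤ ∫ ω, A * X j ω ∂P := by
        refine integral_mono_ae (hXXint i j) ((hXint j).const_mul _) ?_
        filter_upwards [hXb i, hXb j] with ω hi hj
        exact mul_le_mul_of_nonneg_right hi.2 hj.1
      rw [integral_const_mul, hXE] at this
      nlinarith
    rcases le_total (a i) (a j) with h | h
    · rwa [min_eq_left h]
    · rwa [min_eq_right h]
  have hmm : min (a i) (a j) * max (a i) (a j) = a i * a j := min_mul_max _ _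
  have hgg : 0 ≤ g i * g j := mul_nonneg (hg i) (hg j)
  have key := mul_le_mul_of_nonneg_left hcov hgg
  have expand : A ^ 2 * (g i * g j * min (a i) (a j) * (1 - max (a i) (a j)))
      = g i * g j * (A ^ 2 * min (a i) (a j))
        - A ^ 2 * (g i * g j) * (min (a i) (a j) * max (a i) (a j)) := by ring
  have heq : g i * (a i * A) * (g j * (a j * A)) = A ^ 2 * (g i * g j) * (a i * a j) := by
    ring
  rw [expand, hmm, heq]
  linarith [key]
end

section
/- Let n ≥ 2 be an integer and w₁, …, w_n > 0. The function ψ(a) = ( Σ_{i=1}^{n} i·w_i·aⁱ ) / ( Σ_{i=1}^{n} w_i·aⁱ ) is strictly increasing on (0, ∞), with lim_{a→0⁺} ψ(a) = 1 and lim_{a→∞} ψ(a) = n. Consequently, for every c ∈ (1, n) there exists a unique a > 0 with Σ_{i=1}^{n} i·w_i·aⁱ = c·Σ_{i=1}^{n} w_i·aⁱ. -/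
open Filter Topology

private noncomputable def Nf (n : ℕ) (w : ℕ → ℝ) (a : ℝ) : ℝ :=
  ∑ i ∈ Finset.Icc 1 n, (i : ℝ) * w i * a ^ i

private noncomputable def Df (n : ℕ) (w : ℕ → ℝ) (a : ℝ) : ℝ :=
  ∑ i ∈ Finset.Icc 1 n, w i * a ^ i

private lemma Dpos (n : ℕ) (hn : 2 ≤ n) (w : ℕ → ℝ)
    (hw : ∀ i ∈ Finset.Icc 1 n, 0 < w i) {a : ℝ} (ha : 0 < a) :
    0 < Df n w a := by
  refine Finset.sum_pos (fun i hi => mul_pos (hw i hi) (pow_pos ha i)) ?_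
  exact ⟨1, Finset.mem_Icc.mpr ⟨le_refl 1, by omega⟩⟩

private lemma diffle {a b : ℝ} (ha : 0 ≤ a) (hab : a ≤ b) {i j : ℕ} (hij : j ≤ i) :
    a ^ i * b ^ j ≤ a ^ j * b ^ i := by
  have hb : 0 ≤ b := ha.trans hab
  have h1 : a ^ i = a ^ j * a ^ (i - j) := by rw [← pow_add]; congr 1; omega
  have h2 : b ^ i = b ^ (i - j) * b ^ j := by rw [← pow_add]; congr 1; omega
  rw [h1, h2, mul_assoc]
  refine mul_le_mul_of_nonneg_left ?_ (pow_nonneg ha j)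
  exact mul_le_mul_of_nonneg_right (pow_le_pow_left₀ ha hab _) (pow_nonneg hb j)

private lemma cross (n : ℕ) (hn : 2 ≤ n) (w : ℕ → ℝ)
    (hw : ∀ i ∈ Finset.Icc 1 n, 0 < w i) {a b : ℝ} (ha : 0 < a) (hab : a < b) :
    Nf n w a * Df n w b < Nf n w b * Df n w a := by
  have hb : 0 < b := ha.trans hab
  set S := Finset.Icc 1 n with hS
  set X1 := ∑ i ∈ S, ∑ j ∈ S, ((i:ℝ) * (w i * w j) * (a ^ i * b ^ j)) with hX1def
  set X3 := ∑ i ∈ S, ∑ j ∈ S, ((i:ℝ) * (w i * w j) * (a ^ j * b ^ i)) with hX3def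
  have c1 : ∑ i ∈ S, ∑ j ∈ S, ((j:ℝ) * (w i * w j) * (a ^ i * b ^ j)) = X3 := by
    rw [Finset.sum_comm]
    exact Finset.sum_congr rfl fun i _ => Finset.sum_congr rfl fun j _ => by ring
  have c2 : ∑ i ∈ S, ∑ j ∈ S, ((j:ℝ) * (w i * w j) * (a ^ j * b ^ i)) = X1 := by
    rw [Finset.sum_comm]
    exact Finset.sum_congr rfl fun i _ => Finset.sum_congr rfl fun j _ => by ring
  have inner : ∀ i j : ℕ, ((i:ℝ) - j) * (w i * w j) * (a ^ i * b ^ j - a ^ j * b ^ i)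
      = (i:ℝ) * (w i * w j) * (a ^ i * b ^ j) - (j:ℝ) * (w i * w j) * (a ^ i * b ^ j)
        - ((i:ℝ) * (w i * w j) * (a ^ j * b ^ i) - (j:ℝ) * (w i * w j) * (a ^ j * b ^ i)) :=
    fun i j => by ring
  have key : ∑ i ∈ S, ∑ j ∈ S,
      (((i:ℝ) - j) * (w i * w j) * (a ^ i * b ^ j - a ^ j * b ^ i)) = 2 * (X1 - X3) := by
    simp only [inner, Finset.sum_sub_distrib]
    rw [c1, c2]; ring
  have hX1 : X1 = Nf n w a * Df n w b := by
    rw [Nf, Df, Finset.sum_mul_sum]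
    exact Finset.sum_congr rfl fun i _ => Finset.sum_congr rfl fun j _ => by ring
  have hX3 : X3 = Nf n w b * Df n w a := by
    rw [Nf, Df, Finset.sum_mul_sum]
    exact Finset.sum_congr rfl fun i _ => Finset.sum_congr rfl fun j _ => by ring
  have Tnonpos : ∀ i ∈ S, ∀ j ∈ S,
      ((i:ℝ) - j) * (w i * w j) * (a ^ i * b ^ j - a ^ j * b ^ i) ≤ 0 := by
    intro i hi j hj
    have hW : 0 < w i * w j := mul_pos (hw i hi) (hw j hj)
    rcases le_total i j with hij | hij
    · have h1 : ((i:ℝ) - j) ≤ 0 := by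
        simp only [sub_nonpos]; exact_mod_cast hij
      have h2 : 0 ≤ a ^ i * b ^ j - a ^ j * b ^ i := by
        linarith [diffle ha.le hab.le hij]
      exact mul_nonpos_iff.mpr (Or.inr ⟨mul_nonpos_iff.mpr (Or.inr ⟨h1, hW.le⟩), h2⟩)
    · have h1 : (0:ℝ) ≤ (i:ℝ) - j := by
        simp only [sub_nonneg]; exact_mod_cast hij
      have h2 : a ^ i * b ^ j - a ^ j * b ^ i ≤ 0 := by
        linarith [diffle ha.le hab.le hij]
      exact mul_nonpos_iff.mpr (Or.inl ⟨mul_nonneg h1 hW.le, h2⟩)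
  have h1n : (1:ℕ) ∈ S := Finset.mem_Icc.mpr ⟨le_refl 1, by omega⟩
  have hnn : n ∈ S := Finset.mem_Icc.mpr ⟨by omega, le_refl n⟩
  have Tneg : (((1:ℕ):ℝ) - (n:ℕ)) * (w 1 * w n) * (a ^ 1 * b ^ n - a ^ n * b ^ 1) < 0 := by
    have hW : 0 < w 1 * w n := mul_pos (hw 1 h1n) (hw n hnn)
    have hc : (((1:ℕ):ℝ) - (n:ℕ)) < 0 := by
      have : (2:ℝ) ≤ (n:ℕ) := by exact_mod_cast hn
      push_cast; linarith
    have han : a ^ n = a * a ^ (n-1) := by rw [← pow_succ']; congr 1; omega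
    have hbn : b ^ n = b * b ^ (n-1) := by rw [← pow_succ']; congr 1; omega
    have h3 : a ^ (n-1) < b ^ (n-1) := pow_lt_pow_left₀ hab ha.le (by omega)
    have hdiff : 0 < a ^ 1 * b ^ n - a ^ n * b ^ 1 := by
      have e : a ^ 1 * b ^ n - a ^ n * b ^ 1 = a * b * (b ^ (n-1) - a ^ (n-1)) := by
        rw [han, hbn]; ring
      rw [e]
      exact mul_pos (mul_pos ha hb) (sub_pos.mpr h3)
    exact mul_neg_of_neg_of_pos (mul_neg_of_neg_of_pos hc hW) hdiff
  have lt0 : ∑ i ∈ S, ∑ j ∈ S,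
      (((i:ℝ) - j) * (w i * w j) * (a ^ i * b ^ j - a ^ j * b ^ i)) < 0 := by
    have inner1 : ∑ j ∈ S, (((1:ℕ):ℝ) - j) * (w 1 * w j) * (a ^ 1 * b ^ j - a ^ j * b ^ 1) < 0 := by
      calc ∑ j ∈ S, (((1:ℕ):ℝ) - j) * (w 1 * w j) * (a ^ 1 * b ^ j - a ^ j * b ^ 1)
          < ∑ _j ∈ S, (0:ℝ) :=
            Finset.sum_lt_sum (fun j hj => Tnonpos 1 h1n j hj) ⟨n, hnn, Tneg⟩
        _ = 0 := Finset.sum_const_zero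
    calc ∑ i ∈ S, ∑ j ∈ S, (((i:ℝ) - j) * (w i * w j) * (a ^ i * b ^ j - a ^ j * b ^ i))
        < ∑ _i ∈ S, (0:ℝ) :=
          Finset.sum_lt_sum
            (fun i hi => Finset.sum_nonpos (fun j hj => Tnonpos i hi j hj))
            ⟨1, h1n, inner1⟩
      _ = 0 := Finset.sum_const_zero
  rw [key] at lt0
  rw [hX1, hX3] at lt0
  linarith

private lemma myMono (n : ℕ) (hn : 2 ≤ n) (w : ℕ → ℝ)
    (hw : ∀ i ∈ Finset.Icc 1 n, 0 < w i) :
    StrictMonoOn (fun a : ℝ => Nf n w a / Df n w a) (Set.Ioi 0) := by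
  intro a ha b hb hab
  simp only
  rw [div_lt_div_iff₀ (Dpos n hn w hw ha) (Dpos n hn w hw hb)]
  exact cross n hn w hw ha hab

private lemma myZero (n : ℕ) (hn : 2 ≤ n) (w : ℕ → ℝ)
    (hw : ∀ i ∈ Finset.Icc 1 n, 0 < w i) :
    Tendsto (fun a : ℝ => Nf n w a / Df n w a) (nhdsWithin 0 (Set.Ioi 0)) (nhds 1) := by
  have h1n : (1:ℕ) ∈ Finset.Icc 1 n := Finset.mem_Icc.mpr ⟨le_refl 1, by omega⟩
  set g : ℝ → ℝ := fun a => ∑ i ∈ Finset.Icc 1 n, (i:ℝ) * w i * a ^ (i - 1) with hg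
  set h : ℝ → ℝ := fun a => ∑ i ∈ Finset.Icc 1 n, w i * a ^ (i - 1) with hh
  have hgc : Continuous g := continuous_finset_sum _ fun i _ => by fun_prop
  have hhc : Continuous h := continuous_finset_sum _ fun i _ => by fun_prop
  have hg0 : g 0 = w 1 := by
    show (∑ i ∈ Finset.Icc 1 n, (i:ℝ) * w i * (0:ℝ) ^ (i - 1)) = w 1
    rw [Finset.sum_eq_single_of_mem 1 h1n]
    · norm_num
    · intro i hi hne
      have : i - 1 ≠ 0 := by
        rw [Finset.mem_Icc] at hi; omega
      simp [zero_pow this]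
  have hh0 : h 0 = w 1 := by
    show (∑ i ∈ Finset.Icc 1 n, w i * (0:ℝ) ^ (i - 1)) = w 1
    rw [Finset.sum_eq_single_of_mem 1 h1n]
    · norm_num
    · intro i hi hne
      have : i - 1 ≠ 0 := by
        rw [Finset.mem_Icc] at hi; omega
      simp [zero_pow this]
  have hlim : Tendsto (fun a : ℝ => g a / h a) (nhdsWithin 0 (Set.Ioi 0)) (nhds 1) := by
    have := (hgc.tendsto 0).div (hhc.tendsto 0) (by rw [hh0]; exact (hw 1 h1n).ne')
    rw [hg0, hh0, div_self (hw 1 h1n).ne'] at this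
    exact this.mono_left nhdsWithin_le_nhds
  refine hlim.congr' ?_
  filter_upwards [self_mem_nhdsWithin] with a (ha : a ∈ Set.Ioi 0)
  have ha0 : (a:ℝ) ≠ 0 := ne_of_gt ha
  have hNa : Nf n w a = a * g a := by
    rw [Nf, hg, Finset.mul_sum]
    refine Finset.sum_congr rfl fun i hi => ?_
    have h1 : a ^ i = a * a ^ (i - 1) := by
      rw [← pow_succ']; congr 1; rw [Finset.mem_Icc] at hi; omega
    rw [h1]; ring
  have hDa : Df n w a = a * h a := by
    rw [Df, hh, Finset.mul_sum]
    refine Finset.sum_congr rfl fun i hi => ?_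
    have h1 : a ^ i = a * a ^ (i - 1) := by
      rw [← pow_succ']; congr 1; rw [Finset.mem_Icc] at hi; omega
    rw [h1]; ring
  rw [hNa, hDa, mul_div_mul_left _ _ ha0]

private lemma myInf (n : ℕ) (hn : 2 ≤ n) (w : ℕ → ℝ)
    (hw : ∀ i ∈ Finset.Icc 1 n, 0 < w i) :
    Tendsto (fun a : ℝ => Nf n w a / Df n w a) atTop (nhds (n : ℝ)) := by
  have hnn : n ∈ Finset.Icc 1 n := Finset.mem_Icc.mpr ⟨by omega, le_refl n⟩
  set G : ℝ → ℝ := fun b => ∑ i ∈ Finset.Icc 1 n, (i:ℝ) * w i * b ^ (n - i) with hG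
  set H : ℝ → ℝ := fun b => ∑ i ∈ Finset.Icc 1 n, w i * b ^ (n - i) with hH
  have hGc : Continuous G := continuous_finset_sum _ fun i _ => by fun_prop
  have hHc : Continuous H := continuous_finset_sum _ fun i _ => by fun_prop
  have hG0 : G 0 = (n:ℝ) * w n := by
    show (∑ i ∈ Finset.Icc 1 n, (i:ℝ) * w i * (0:ℝ) ^ (n - i)) = (n:ℝ) * w n
    rw [Finset.sum_eq_single_of_mem n hnn]
    · norm_num
    · intro i hi hne
      have : n - i ≠ 0 := by rw [Finset.mem_Icc] at hi; omega
      simp [zero_pow this]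
  have hH0 : H 0 = w n := by
    show (∑ i ∈ Finset.Icc 1 n, w i * (0:ℝ) ^ (n - i)) = w n
    rw [Finset.sum_eq_single_of_mem n hnn]
    · norm_num
    · intro i hi hne
      have : n - i ≠ 0 := by rw [Finset.mem_Icc] at hi; omega
      simp [zero_pow this]
  have hlim : Tendsto (fun a : ℝ => G a⁻¹ / H a⁻¹) atTop (nhds (n : ℝ)) := by
    have hdiv : Tendsto (fun b : ℝ => G b / H b) (nhds 0) (nhds ((n:ℝ) * w n / w n)) := by
      refine (hGc.tendsto 0).div (hHc.tendsto 0) ?_ |>.congr (fun _ => rfl) |>.mono_right ?_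
      · rw [hH0]; exact (hw n hnn).ne'
      · rw [hG0, hH0]
    have := hdiv.comp tendsto_inv_atTop_zero
    rw [mul_div_cancel_right₀ _ (hw n hnn).ne'] at this
    exact this
  refine hlim.congr' ?_
  filter_upwards [eventually_gt_atTop (0:ℝ)] with a ha
  have ha0 : (a:ℝ) ≠ 0 := ne_of_gt ha
  have hpow : ∀ i ∈ Finset.Icc 1 n, a ^ n * (a⁻¹) ^ (n - i) = a ^ i := by
    intro i hi
    rw [Finset.mem_Icc] at hi
    have h1 : a ^ n = a ^ i * a ^ (n - i) := by rw [← pow_add]; congr 1; omega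
    rw [inv_pow, h1, mul_assoc, mul_inv_cancel₀ (pow_ne_zero _ ha0), mul_one]
  have hNa : Nf n w a = a ^ n * G a⁻¹ := by
    rw [Nf, hG, Finset.mul_sum]
    refine Finset.sum_congr rfl fun i hi => ?_
    rw [← hpow i hi]; ring
  have hDa : Df n w a = a ^ n * H a⁻¹ := by
    rw [Df, hH, Finset.mul_sum]
    refine Finset.sum_congr rfl fun i hi => ?_
    rw [← hpow i hi]; ring
  rw [hNa, hDa, mul_div_mul_left _ _ (pow_ne_zero _ ha0)]

/-- For `n ≥ 2` and positive weights `w₁, …, w_n`, the function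
`ψ(a) = (Σ_{i=1}^n i wᵢ aⁱ)/(Σ_{i=1}^n wᵢ aⁱ)` is strictly increasing on `(0, ∞)`, tends to
`1` as `a → 0⁺` and to `n` as `a → ∞`; consequently, for every `c ∈ (1, n)` there is a
unique `a > 0` with `Σ i wᵢ aⁱ = c Σ wᵢ aⁱ`. -/
theorem stmt_17 (n : ℕ) (hn : 2 ≤ n) (w : ℕ → ℝ) (hw : ∀ i ∈ Finset.Icc 1 n, 0 < w i) :
    StrictMonoOn (fun a : ℝ =>
      (∑ i ∈ Finset.Icc 1 n, (i : ℝ) * w i * a ^ i) /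
        (∑ i ∈ Finset.Icc 1 n, w i * a ^ i)) (Set.Ioi 0) ∧
    Tendsto (fun a : ℝ =>
      (∑ i ∈ Finset.Icc 1 n, (i : ℝ) * w i * a ^ i) /
        (∑ i ∈ Finset.Icc 1 n, w i * a ^ i)) (nhdsWithin 0 (Set.Ioi 0)) (nhds 1) ∧
    Tendsto (fun a : ℝ =>
      (∑ i ∈ Finset.Icc 1 n, (i : ℝ) * w i * a ^ i) /
        (∑ i ∈ Finset.Icc 1 n, w i * a ^ i)) atTop (nhds (n : ℝ)) ∧
    ∀ c : ℝ, 1 < c → c < n →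
      ∃! a : ℝ, 0 < a ∧
        ∑ i ∈ Finset.Icc 1 n, (i : ℝ) * w i * a ^ i
          = c * ∑ i ∈ Finset.Icc 1 n, w i * a ^ i := by
  have hmono := myMono n hn w hw
  have hzero := myZero n hn w hw
  have hinf := myInf n hn w hw
  refine ⟨hmono, hzero, hinf, ?_⟩
  intro c hc1 hcn
  set ψ : ℝ → ℝ := fun a => Nf n w a / Df n w a with hψ
  obtain ⟨a₀, ha₀lt, ha₀mem⟩ :=
    ((hzero.eventually_lt_const hc1).and self_mem_nhdsWithin).exists
  have ha₀pos : (0:ℝ) < a₀ := ha₀mem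
  obtain ⟨a₁, ha₁gt, ha₁big⟩ :=
    ((hinf.eventually_const_lt hcn).and (eventually_gt_atTop a₀)).exists
  have ha₁pos : (0:ℝ) < a₁ := ha₀pos.trans ha₁big
  have hcont : ContinuousOn ψ (Set.Icc a₀ a₁) := by
    apply ContinuousOn.div
    · exact (continuous_finset_sum _ fun i _ => by fun_prop : Continuous (Nf n w)).continuousOn
    · exact (continuous_finset_sum _ fun i _ => by fun_prop : Continuous (Df n w)).continuousOn
    · intro x hx
      exact (Dpos n hn w hw (lt_of_lt_of_le ha₀pos hx.1)).ne'
  have hival : Set.Ioo (ψ a₀) (ψ a₁) ⊆ ψ '' Set.Ioo a₀ a₁ :=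
    intermediate_value_Ioo ha₁big.le hcont
  obtain ⟨x, hxmem, hxval⟩ := hival ⟨ha₀lt, ha₁gt⟩
  have hxpos : 0 < x := ha₀pos.trans hxmem.1
  have heq : Nf n w x = c * Df n w x :=
    (div_eq_iff (Dpos n hn w hw hxpos).ne').mp hxval
  refine ⟨x, ⟨hxpos, heq⟩, ?_⟩
  rintro y ⟨hypos, hyeq⟩
  have hψy : ψ y = c := by
    show Nf n w y / Df n w y = c
    rw [div_eq_iff (Dpos n hn w hw hypos).ne']
    exact hyeq
  refine hmono.injOn hypos hxpos ?_
  show ψ y = ψ x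
  rw [hψy, hxval]
end
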